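/- arXiv:0901.1104 — 11 statements merged into one kernel-verified Lean document; each statement's English description precedes it below -/
import Mathlib

section
/- For every real t > 0, the Mathieu series ∑_{k=1}^∞ 2k/(k²+t²)² is strictly less than 1/t². -/
/-!
With `a = n² + t²`, the `n`-th term `2n / a²` is strictly smaller than
`2n / (a² - n²) = 1 / (t² + n(n-1)) - 1 / (t² + n(n+1))`, and these upper bounds telescope to `1 / t²`.
-/
open Filter Topology

lemma two_mul_div_sq_lt_inv_sub_inv {a x : ℝ} (hx : 0 < x) (hxa : x < a) :
    2 * x / a ^ 2 < (a - x)⁻¹ - (a + x)⁻¹ := by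
  have hax : 0 < a - x := sub_pos.2 hxa
  calc 2 * x / a ^ 2 < 2 * x / ((a - x) * (a + x)) := by
        gcongr
        · exact mul_pos hax (by linarith)
        · nlinarith
    _ = (a - x)⁻¹ - (a + x)⁻¹ := by
        have : a + x ≠ 0 := by linarith
        field_simp
        ring

lemma hasSum_sub_succ_of_antitone {g : ℕ → ℝ} {l : ℝ} (hg : Antitone g)
    (hlim : Tendsto g atTop (𝓝 l)) : HasSum (fun k ↦ g k - g (k + 1)) (g 0 - l) := by
  rw [hasSum_iff_tendsto_nat_of_nonneg fun k ↦ sub_nonneg.2 (hg k.le_succ)]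
  simpa only [Finset.sum_range_sub'] using hlim.const_sub (g 0)

lemma antitone_inv_add_mul_succ {c : ℝ} (hc : 0 < c) :
    Antitone fun k : ℕ ↦ (c + k * (k + 1))⁻¹ :=
  antitone_nat_of_succ_le fun k ↦ by gcongr <;> exact k.le_succ

lemma tendsto_inv_add_mul_succ (c : ℝ) :
    Tendsto (fun k : ℕ ↦ (c + k * (k + 1))⁻¹) atTop (𝓝 0) := by
  refine tendsto_inv_atTop_zero.comp (tendsto_atTop_add_const_left _ c ?_)
  exact tendsto_natCast_atTop_atTop.atTop_mul_atTop₀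
    (tendsto_atTop_add_const_right _ 1 tendsto_natCast_atTop_atTop)

theorem mathieu_inequality (t : ℝ) (ht : 0 < t) :
    (∑' k : ℕ, 2 * ((k : ℝ) + 1) / (((k : ℝ) + 1) ^ 2 + t ^ 2) ^ 2) < 1 / t ^ 2 := by
  set g : ℕ → ℝ := fun k ↦ (t ^ 2 + k * (k + 1))⁻¹
  have htelescope : HasSum (fun k ↦ g k - g (k + 1)) (1 / t ^ 2) := by
    simpa [g] using hasSum_sub_succ_of_antitone (antitone_inv_add_mul_succ (pow_pos ht 2))
      (tendsto_inv_add_mul_succ (t ^ 2))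
  have hterm (k : ℕ) :
      2 * ((k : ℝ) + 1) / (((k : ℝ) + 1) ^ 2 + t ^ 2) ^ 2 < g k - g (k + 1) := by
    convert two_mul_div_sq_lt_inv_sub_inv (a := ((k : ℝ) + 1) ^ 2 + t ^ 2) (x := k + 1)
      (by positivity) (by nlinarith) using 3 <;> push_cast <;> ring
  calc (∑' k : ℕ, 2 * ((k : ℝ) + 1) / (((k : ℝ) + 1) ^ 2 + t ^ 2) ^ 2)
      < ∑' k, (g k - g (k + 1)) :=
        Summable.tsum_lt_tsum_of_nonneg (fun k ↦ by positivity) (fun k ↦ (hterm k).le) (hterm 0)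
          htelescope.summable
    _ = 1 / t ^ 2 := htelescope.tsum_eq
end

section
/- For every natural number k ≥ 1 and every real t ≠ 0, the inequalities 1/(k(k-1)+t²+1/2) − 1/(k(k+1)+t²+1/2) < 2k/(k²+t²)² < 1/(k(k-1)+t²) − 1/(k(k+1)+t²) hold. -/
/-!
With `a = k² + t²` the denominators are `a ∓ k` and `a + 1/2 ∓ k`, and
`1/(b - k) - 1/(b + k) = 2k/(b² - k²)`. The upper bound is then `a² - k² < a²`; the lower bound is
`a² < (a + 1/2)² - k²`, which reduces to `0 < t² + 1/4`.
-/

lemma one_div_sub_sub_one_div_add {b x : ℝ} (h₁ : b - x ≠ 0) (h₂ : b + x ≠ 0) :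
    1 / (b - x) - 1 / (b + x) = 2 * x / (b ^ 2 - x ^ 2) := by
  rw [div_sub_div _ _ h₁ h₂, sq_sub_sq]
  ring

lemma div_sq_lt_one_div_sub_sub_one_div_add {a x : ℝ} (hx : 0 < x) (hxa : x < a) :
    2 * x / a ^ 2 < 1 / (a - x) - 1 / (a + x) := by
  rw [one_div_sub_sub_one_div_add (by linarith) (by linarith)]
  exact div_lt_div_of_pos_left (by linarith) (by nlinarith) (by nlinarith)

lemma one_div_sub_sub_one_div_add_lt_div_sq {a b x : ℝ} (hx : 0 < x) (ha : 0 < a) (hb : 0 < b)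
    (h : a ^ 2 + x ^ 2 < b ^ 2) :
    1 / (b - x) - 1 / (b + x) < 2 * x / a ^ 2 := by
  have hxb : x < b := by nlinarith
  rw [one_div_sub_sub_one_div_add (by linarith) (by linarith)]
  exact div_lt_div_of_pos_left (by linarith) (by positivity) (by linarith)

theorem makai_termwise (k : ℕ) (hk : 1 ≤ k) (t : ℝ) (ht : t ≠ 0) :
    1 / ((k : ℝ) * ((k : ℝ) - 1) + t ^ 2 + 1 / 2)
      - 1 / ((k : ℝ) * ((k : ℝ) + 1) + t ^ 2 + 1 / 2)
      < 2 * (k : ℝ) / (((k : ℝ) ^ 2 + t ^ 2) ^ 2) ∧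
    2 * (k : ℝ) / (((k : ℝ) ^ 2 + t ^ 2) ^ 2)
      < 1 / ((k : ℝ) * ((k : ℝ) - 1) + t ^ 2)
        - 1 / ((k : ℝ) * ((k : ℝ) + 1) + t ^ 2) := by
  have hk₁ : (1 : ℝ) ≤ k := by exact_mod_cast hk
  have ht₂ : 0 < t ^ 2 := by positivity
  constructor
  · have h := one_div_sub_sub_one_div_add_lt_div_sq (a := (k : ℝ) ^ 2 + t ^ 2)
      (b := (k : ℝ) ^ 2 + t ^ 2 + 1 / 2) (x := k) (by linarith) (by positivity) (by positivity)
      (by nlinarith)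
    convert h using 3 <;> ring
  · have h := div_sq_lt_one_div_sub_sub_one_div_add (a := (k : ℝ) ^ 2 + t ^ 2) (x := k)
      (by linarith) (by nlinarith)
    convert h using 3 <;> ring
end

section
/- For every μ > 0, t > 0, and natural number k ≥ 1, the inequality 2kμ/(k²+t²)^{μ+1} < 1/(k(k-1)+t²)^μ − 1/(k(k+1)+t²)^μ holds. -/
/-!
Put `C = k² + t²` and `u = k / C ∈ (0, 1)`; the two denominators on the right are `C (1 ∓ u)`,
so after factoring out `C ^ (-μ)` the claim is `2 μ u < (1 - u) ^ (-μ) - (1 + u) ^ (-μ)`.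
Both sides vanish at `u = 0`, and the derivative of the right side,
`μ ((1 - u) ^ (-μ-1) + (1 + u) ^ (-μ-1))`, exceeds `2 μ` by AM-GM, because
`(1 - u) (1 + u) < 1`.
-/

open Set Real

lemma two_lt_rpow_neg_add_rpow_neg {a b q : ℝ} (ha : 0 < a) (hb : 0 < b) (hab : a * b < 1)
    (hq : 0 < q) : 2 < a ^ (-q) + b ^ (-q) := by
  have hprod : 1 < a ^ (-q) * b ^ (-q) := by
    rw [← mul_rpow ha.le hb.le]
    exact one_lt_rpow_of_pos_of_lt_one_of_neg (mul_pos ha hb) hab (neg_neg_of_pos hq)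
  nlinarith [sq_nonneg (a ^ (-q) - b ^ (-q)), rpow_pos_of_pos ha (-q), rpow_pos_of_pos hb (-q)]

lemma hasDerivAt_one_sub_rpow_neg_sub_one_add_rpow_neg (μ : ℝ) {x : ℝ} (h0 : 0 < 1 - x)
    (h1 : 0 < 1 + x) :
    HasDerivAt (fun u : ℝ => (1 - u) ^ (-μ) - (1 + u) ^ (-μ))
      (μ * ((1 - x) ^ (-μ - 1) + (1 + x) ^ (-μ - 1))) x := by
  have hsub := (hasDerivAt_rpow_const (p := -μ) (Or.inl h0.ne')).comp x
    ((hasDerivAt_id x).const_sub 1)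
  have hadd := (hasDerivAt_rpow_const (p := -μ) (Or.inl h1.ne')).comp x
    ((hasDerivAt_id x).const_add 1)
  exact (hsub.sub hadd).congr_deriv (by ring)

theorem two_mul_mul_lt_one_sub_rpow_neg_sub_one_add_rpow_neg {μ u : ℝ} (hμ : 0 < μ)
    (hu0 : 0 < u) (hu1 : u < 1) : 2 * μ * u < (1 - u) ^ (-μ) - (1 + u) ^ (-μ) := by
  set F : ℝ → ℝ := fun v => (1 - v) ^ (-μ) - (1 + v) ^ (-μ) - 2 * μ * v
  have hF : ∀ x ∈ Ico (0 : ℝ) 1,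
      HasDerivAt F (μ * ((1 - x) ^ (-μ - 1) + (1 + x) ^ (-μ - 1)) - 2 * μ) x := fun x hx =>
    (hasDerivAt_one_sub_rpow_neg_sub_one_add_rpow_neg μ (by linarith [hx.2])
      (by linarith [hx.1])).sub (by simpa using (hasDerivAt_id x).const_mul (2 * μ))
  have hmono : StrictMonoOn F (Ico 0 1) := by
    refine strictMonoOn_of_hasDerivWithinAt_pos (convex_Ico 0 1)
      (fun x hx => (hF x hx).continuousAt.continuousWithinAt)
      (fun x hx => (hF x (interior_subset hx)).hasDerivWithinAt) fun x hx => ?_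
    rw [interior_Ico] at hx
    have hsum : 2 < (1 - x) ^ (-μ - 1) + (1 + x) ^ (-μ - 1) := by
      rw [show -μ - 1 = -(μ + 1) by ring]
      exact two_lt_rpow_neg_add_rpow_neg (by linarith [hx.2]) (by linarith [hx.1])
        (by nlinarith [hx.1]) (by linarith)
    nlinarith
  have h := hmono (left_mem_Ico.mpr one_pos) ⟨hu0.le, hu1⟩ hu0
  simp only [F, sub_zero, add_zero, one_rpow, mul_zero, sub_self] at h
  linarith

theorem two_mul_mul_div_rpow_lt_one_div_rpow_sub_one_div_rpow {μ C x : ℝ} (hμ : 0 < μ)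
    (hx : 0 < x) (hxC : x < C) :
    2 * x * μ / C ^ (μ + 1) < 1 / (C - x) ^ μ - 1 / (C + x) ^ μ := by
  have hC : 0 < C := hx.trans hxC
  set u := x / C
  have hu0 : 0 < u := div_pos hx hC
  have hu1 : u < 1 := (div_lt_one hC).mpr hxC
  have key := two_mul_mul_lt_one_sub_rpow_neg_sub_one_add_rpow_neg hμ hu0 hu1
  have hCu : C * u = x := mul_div_cancel₀ x hC.ne'
  have hsub : C - x = C * (1 - u) := by linear_combination hCu
  have hadd : C + x = C * (1 + u) := by linear_combination -hCu
  have hscale : ∀ v : ℝ, 0 ≤ v → 1 / (C * v) ^ μ = C ^ (-μ) * v ^ (-μ) := fun v hv => by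
    rw [mul_rpow hC.le hv, rpow_neg hC.le, rpow_neg hv, one_div, mul_inv]
  have hlhs : 2 * x * μ / C ^ (μ + 1) = C ^ (-μ) * (2 * μ * u) := by
    rw [rpow_add hC, rpow_one, rpow_neg hC.le, ← hCu]
    field_simp
  rw [hlhs, hsub, hadd, hscale _ (by linarith), hscale _ (by linarith), ← mul_sub]
  exact mul_lt_mul_of_pos_left key (rpow_pos_of_pos hC _)

theorem diananda_termwise (μ t : ℝ) (hμ : 0 < μ) (ht : 0 < t) (k : ℕ) (hk : 1 ≤ k) :
    2 * (k : ℝ) * μ / (((k : ℝ) ^ 2 + t ^ 2) ^ (μ + 1))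
      < 1 / (((k : ℝ) * ((k : ℝ) - 1) + t ^ 2) ^ μ)
        - 1 / (((k : ℝ) * ((k : ℝ) + 1) + t ^ 2) ^ μ) := by
  have hk1 : (1 : ℝ) ≤ k := by exact_mod_cast hk
  rw [show (k : ℝ) * (k - 1) + t ^ 2 = (k ^ 2 + t ^ 2) - k by ring,
    show (k : ℝ) * (k + 1) + t ^ 2 = (k ^ 2 + t ^ 2) + k by ring]
  exact two_mul_mul_div_rpow_lt_one_div_rpow_sub_one_div_rpow hμ (by linarith)
    (by nlinarith [sq_pos_of_pos ht])
end

section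
/- For every μ > 0 and t > 0, the generalized Mathieu series ∑_{k=1}^∞ 2k/(k²+t²)^{μ+1} is strictly less than 1/(μ t^{2μ}). -/
/-!
With `c k = (k² + k + t²) ^ (-μ) / μ`, the `k`-th term is bounded by `c k - c (k + 1)`.
Indeed, for `b = (k + 1)² + t²` and `m = k + 1` we have `b - m = k² + k + t²` and
`b + m = (k + 1)² + (k + 1) + t²`, and `((b - m) ^ (-μ) - (b + m) ^ (-μ)) / μ`, the integral of
`y ^ (-μ - 1)` over `[b - m, b + m]`, exceeds the midpoint value `2 m b ^ (-μ - 1)` because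
`y ^ (-μ - 1)` is strictly convex. The bounds telescope to `c 0 = 1 / (μ t ^ (2μ))`.
-/

open Real Set Filter Topology

theorem strictConvexOn_rpow_of_neg {p : ℝ} (hp : p < 0) :
    StrictConvexOn ℝ (Ioi 0) fun x : ℝ ↦ x ^ p := by
  apply strictConvexOn_of_deriv2_pos' (convex_Ioi 0)
  · exact fun x hx ↦ (continuousAt_rpow_const x p (.inl (ne_of_gt hx))).continuousWithinAt
  · intro x hx
    have hpp : 0 < p * (p - 1) := mul_pos_of_neg_of_neg hp (by linarith)
    rw [iter_deriv_rpow_const]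
    simpa [descPochhammer_succ_right] using mul_pos hpp (rpow_pos_of_pos hx (p - 2))

theorem two_mul_rpow_lt_rpow_sub_add_rpow_add {b x p : ℝ} (hx : 0 < x) (hxb : x < b)
    (hp : p < 0) : 2 * b ^ p < (b - x) ^ p + (b + x) ^ p := by
  have := (strictConvexOn_rpow_of_neg hp).2 (show 0 < b - x by linarith)
    (show 0 < b + x by linarith) (by linarith) one_half_pos one_half_pos (add_halves 1)
  have hmid : 1 / 2 * (b - x) + 1 / 2 * (b + x) = b := by ring
  simp only [smul_eq_mul, hmid] at this
  linarith

theorem two_mul_div_rpow_lt_rpow_sub_sub_rpow_add_div {b m μ : ℝ} (hμ : 0 < μ) (hm : 0 < m)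
    (hmb : m < b) : 2 * m / b ^ (μ + 1) < ((b - m) ^ (-μ) - (b + m) ^ (-μ)) / μ := by
  have hb : 0 < b := hm.trans hmb
  set φ : ℝ → ℝ := fun x ↦ (b - x) ^ (-μ) - (b + x) ^ (-μ) - 2 * μ * b ^ (-μ - 1) * x
  have hφ : ∀ x ∈ Icc 0 m, HasDerivAt φ
      (μ * ((b - x) ^ (-μ - 1) + (b + x) ^ (-μ - 1) - 2 * b ^ (-μ - 1))) x := by
    intro x ⟨hx0, hxm⟩
    have hsub := ((hasDerivAt_id x).const_sub b).rpow_const (p := -μ)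
      (.inl (sub_pos.2 (hxm.trans_lt hmb)).ne')
    have hadd := ((hasDerivAt_id x).const_add b).rpow_const (p := -μ)
      (.inl (add_pos_of_pos_of_nonneg hb hx0).ne')
    refine ((hsub.sub hadd).sub
      ((hasDerivAt_id x).const_mul (2 * μ * b ^ (-μ - 1)))).congr_deriv ?_
    simp only [id]
    ring
  have hmono : StrictMonoOn φ (Icc 0 m) := by
    refine strictMonoOn_of_deriv_pos (convex_Icc 0 m)
      (fun x hx ↦ (hφ x hx).continuousAt.continuousWithinAt) fun x hx ↦ ?_
    rw [interior_Icc] at hx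
    rw [(hφ x (Ioo_subset_Icc_self hx)).deriv]
    have := two_mul_rpow_lt_rpow_sub_add_rpow_add hx.1 (hx.2.trans hmb) (by linarith : -μ - 1 < 0)
    nlinarith
  have hφm := hmono (left_mem_Icc.2 hm.le) (right_mem_Icc.2 hm.le) hm
  simp only [φ, sub_zero, add_zero, mul_zero, sub_self] at hφm
  rw [show -μ - 1 = -(μ + 1) by ring, rpow_neg hb.le] at hφm
  rw [div_lt_div_iff₀ (rpow_pos_of_pos hb _) hμ]
  have := mul_lt_mul_of_pos_right hφm (rpow_pos_of_pos hb (μ + 1))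
  field_simp at this
  linarith

theorem tsum_lt_sub_of_lt_sub_succ {a c : ℕ → ℝ} {l : ℝ} (ha : ∀ k, 0 ≤ a k)
    (hac : ∀ k, a k < c k - c (k + 1)) (hc : Tendsto c atTop (𝓝 l)) :
    ∑' k, a k < c 0 - l := by
  have hsum : HasSum (fun k ↦ c k - c (k + 1)) (c 0 - l) := by
    rw [hasSum_iff_tendsto_nat_of_nonneg fun k ↦ (ha k).trans (hac k).le]
    simpa only [Finset.sum_range_sub'] using tendsto_const_nhds.sub hc
  calc ∑' k, a k < ∑' k, (c k - c (k + 1)) :=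
        Summable.tsum_lt_tsum_of_nonneg ha (fun k ↦ (hac k).le) (hac 0) hsum.summable
    _ = c 0 - l := hsum.tsum_eq

theorem diananda_inequality (μ t : ℝ) (hμ : 0 < μ) (ht : 0 < t) :
    (∑' k : ℕ, 2 * ((k : ℝ) + 1) / ((((k : ℝ) + 1) ^ 2 + t ^ 2) ^ (μ + 1)))
      < 1 / (μ * t ^ (2 * μ)) := by
  set c : ℕ → ℝ := fun k ↦ ((k : ℝ) ^ 2 + k + t ^ 2) ^ (-μ) / μ
  have hterm : ∀ k : ℕ, 2 * ((k : ℝ) + 1) / ((((k : ℝ) + 1) ^ 2 + t ^ 2) ^ (μ + 1))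
      < c k - c (k + 1) := by
    intro k
    have hk : (0 : ℝ) ≤ k := k.cast_nonneg
    rw [← sub_div]
    convert two_mul_div_rpow_lt_rpow_sub_sub_rpow_add_div hμ (m := k + 1)
      (b := (k + 1) ^ 2 + t ^ 2) (by positivity) (by nlinarith) using 4 <;> push_cast <;> ring
  have hc : Tendsto c atTop (𝓝 0) := by
    have hbase : Tendsto (fun k : ℕ ↦ (k : ℝ) ^ 2 + k + t ^ 2) atTop atTop :=
      tendsto_atTop_mono (fun k ↦ by nlinarith) tendsto_natCast_atTop_atTop
    simpa using ((tendsto_rpow_neg_atTop hμ).comp hbase).div_const μ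
  have hc0 : c 0 = 1 / (μ * t ^ (2 * μ)) := by
    simp only [c, Nat.cast_zero]
    rw [rpow_mul ht.le, rpow_neg (by positivity)]
    norm_num
    field_simp
  have := tsum_lt_sub_of_lt_sub_succ (fun k ↦ by positivity) hterm hc
  rwa [sub_zero, hc0] at this
end

section
/- Let g be convex on (0,∞) with ∫_1^∞ g(x) dx convergent. Then for every u ≥ −1 and y with u²+u+y > 0, ∑_{k=1}^∞ 2(k+u)·g((k+u)²+y) ≤ ∫_{u²+u+y}^∞ g(x) dx. -/
/-!
A convex function on `(0, ∞)` that is integrable at infinity is nonincreasing (a positive secant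
slope would force linear growth) and hence nonnegative. With `c k = (k + u)(k + u + 1) + y`, the
`k`-th term of the series is `(c (k+1) - c k) · g` at the midpoint of `[c k, c (k+1)]`, which by
the Hermite–Hadamard inequality is at most `∫_{c k}^{c (k+1)} g`; these intervals tile
`(c 0, ∞)` with `c 0 = u² + u + y`.
-/

open Set MeasureTheory

lemma not_integrableOn_Ioi_of_forall_le_norm {E : Type*} [NormedAddCommGroup E]
    {f : ℝ → E} {a c : ℝ} (hc : 0 < c) (hf : ∀ t ∈ Ioi a, c ≤ ‖f t‖) :
    ¬ IntegrableOn f (Ioi a) := by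
  intro hint
  have hconst : IntegrableOn (fun _ ↦ c) (Ioi a) :=
    hint.norm.mono' aestronglyMeasurable_const <| ae_restrict_of_forall_mem measurableSet_Ioi
      fun t ht ↦ by simpa [abs_of_pos hc] using hf t ht
  simp [integrableOn_const_iff, hc.ne', Real.volume_Ioi] at hconst

lemma ConvexOn.antitoneOn_of_integrableOn_Ioi {g : ℝ → ℝ} {a b : ℝ}
    (hg : ConvexOn ℝ (Ioi a) g) (hint : IntegrableOn g (Ioi b)) : AntitoneOn g (Ioi a) := by
  intro x hx z hz hxz
  by_contra! hlt
  have hxz' : x < z := hxz.lt_of_ne (ne_of_apply_ne g hlt.ne)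
  set s := (g z - g x) / (z - x)
  have hs : 0 < s := div_pos (sub_pos.2 hlt) (sub_pos.2 hxz')
  have hgrowth : ∀ t, z < t → g x + s * (t - x) ≤ g t := by
    intro t hzt
    have hxt : x < t := hxz'.trans hzt
    have hsecant := hg.secant_mono hx hz (mem_Ioi.2 (lt_trans hx hxt)) hxz'.ne' hxt.ne' hzt.le
    rw [le_div_iff₀ (sub_pos.2 hxt)] at hsecant
    linarith
  set T := max z (x + (1 - g x) / s)
  refine not_integrableOn_Ioi_of_forall_le_norm one_pos (fun t ht ↦ ?_)
    (hint.mono_set (Ioi_subset_Ioi (le_max_left b T)))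
  have hTt : T < t := (le_max_right b T).trans_lt ht
  have hlarge : (1 - g x) / s < t - x := by linarith [le_max_right z (x + (1 - g x) / s)]
  rw [div_lt_iff₀ hs] at hlarge
  rw [Real.norm_eq_abs]
  linarith [hgrowth t ((le_max_left z _).trans_lt hTt), le_abs_self (g t)]

lemma AntitoneOn.nonneg_of_integrableOn_Ioi {g : ℝ → ℝ} {a b x : ℝ}
    (hg : AntitoneOn g (Ioi a)) (hint : IntegrableOn g (Ioi b)) (hx : x ∈ Ioi a) : 0 ≤ g x := by
  by_contra! hneg
  refine not_integrableOn_Ioi_of_forall_le_norm (neg_pos.2 hneg) (fun t ht ↦ ?_)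
    (hint.mono_set (Ioi_subset_Ioi (le_max_left b x)))
  have hxt : x < t := (le_max_right b x).trans_lt ht
  have hgt : g t ≤ g x := hg hx (mem_Ioi.2 (lt_trans hx hxt)) hxt.le
  rw [Real.norm_eq_abs, abs_of_neg (hgt.trans_lt hneg)]
  linarith

lemma ConvexOn.sub_mul_midpoint_le_intervalIntegral {g : ℝ → ℝ} {a b : ℝ} (hab : a ≤ b)
    (hg : ConvexOn ℝ (Icc a b) g) (hint : IntervalIntegrable g volume a b) :
    (b - a) * g ((a + b) / 2) ≤ ∫ x in a..b, g x := by
  have hreflect_mem : ∀ x ∈ Icc a b, a + b - x ∈ Icc a b := fun x hx ↦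
    ⟨by linarith [hx.2], by linarith [hx.1]⟩
  have hint_reflect : IntervalIntegrable (fun x ↦ g (a + b - x)) volume a b := by
    simpa using (hint.comp_sub_left (a + b)).symm
  have hmidpoint : ∀ x ∈ Icc a b, g ((a + b) / 2) ≤ (g x + g (a + b - x)) / 2 := by
    intro x hx
    calc g ((a + b) / 2) = g ((1 / 2 : ℝ) • x + (1 / 2 : ℝ) • (a + b - x)) := by
          simp only [smul_eq_mul]; ring_nf
      _ ≤ (1 / 2 : ℝ) • g x + (1 / 2 : ℝ) • g (a + b - x) :=
          hg.2 hx (hreflect_mem x hx) (by norm_num) (by norm_num) (by norm_num)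
      _ = (g x + g (a + b - x)) / 2 := by simp only [smul_eq_mul]; ring
  have hreflect : ∫ x in a..b, g (a + b - x) = ∫ x in a..b, g x := by
    simp [intervalIntegral.integral_comp_sub_left]
  calc (b - a) * g ((a + b) / 2) = ∫ _ in a..b, g ((a + b) / 2) := by simp
    _ ≤ ∫ x in a..b, (g x + g (a + b - x)) / 2 :=
      intervalIntegral.integral_mono_on hab intervalIntegrable_const
        ((hint.add hint_reflect).div_const 2) hmidpoint
    _ = ∫ x in a..b, g x := by
      rw [intervalIntegral.integral_div, intervalIntegral.integral_add hint hint_reflect,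
        hreflect]
      ring

lemma tsum_le_setIntegral_Ioi_of_le_intervalIntegral {f : ℕ → ℝ} {g : ℝ → ℝ}
    {c : ℕ → ℝ} (hc : Monotone c) (hf : ∀ k, 0 ≤ f k)
    (hg : 0 ≤ᵐ[volume.restrict (Ioi (c 0))] g)
    (hint : IntegrableOn g (Ioi (c 0))) (hfg : ∀ k, f k ≤ ∫ x in c k..c (k + 1), g x) :
    ∑' k, f k ≤ ∫ x in Ioi (c 0), g x := by
  refine Real.tsum_le_of_sum_range_le hf fun n ↦ ?_
  have hpieces : ∀ k, IntervalIntegrable g volume (c k) (c (k + 1)) := fun k ↦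
    (intervalIntegrable_iff_integrableOn_Ioc_of_le (hc k.le_succ)).2
      (hint.mono_set fun x hx ↦ (hc k.zero_le).trans_lt hx.1)
  calc ∑ k ∈ Finset.range n, f k
      ≤ ∑ k ∈ Finset.range n, ∫ x in c k..c (k + 1), g x :=
        Finset.sum_le_sum fun k _ ↦ hfg k
    _ = ∫ x in c 0..c n, g x :=
        intervalIntegral.sum_integral_adjacent_intervals fun k _ ↦ hpieces k
    _ = ∫ x in Ioc (c 0) (c n), g x := intervalIntegral.integral_of_le (hc n.zero_le)
    _ ≤ ∫ x in Ioi (c 0), g x := setIntegral_mono_set hint hg Ioc_subset_Ioi_self.eventuallyLE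

theorem mathieu_upper_hermite_hadamard (g : ℝ → ℝ)
    (hg : ConvexOn ℝ (Set.Ioi (0 : ℝ)) g)
    (hint : MeasureTheory.IntegrableOn g (Set.Ioi (1 : ℝ)))
    (u y : ℝ) (hu : -1 ≤ u) (hy : 0 < u ^ 2 + u + y) :
    (∑' k : ℕ, 2 * ((k : ℝ) + 1 + u) * g (((k : ℝ) + 1 + u) ^ 2 + y))
      ≤ ∫ x in Set.Ioi (u ^ 2 + u + y), g x := by
  set c : ℕ → ℝ := fun k ↦ ((k : ℝ) + u) * ((k : ℝ) + u + 1) + y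
  have hc_zero : c 0 = u ^ 2 + u + y := by simp [c]; ring
  have hc_length : ∀ k : ℕ, c (k + 1) - c k = 2 * ((k : ℝ) + 1 + u) := fun k ↦ by
    simp [c]; ring
  have hc_midpoint : ∀ k : ℕ, (c k + c (k + 1)) / 2 = ((k : ℝ) + 1 + u) ^ 2 + y :=
    fun k ↦ by simp [c]; ring
  have hlength_nonneg : ∀ k : ℕ, 0 ≤ 2 * ((k : ℝ) + 1 + u) := fun k ↦ by
    linarith [k.cast_nonneg (α := ℝ)]
  have hc_mono : Monotone c := monotone_nat_of_le_succ fun k ↦ by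
    linarith [hc_length k, hlength_nonneg k]
  have hc_pos : ∀ k, 0 < c k := fun k ↦ (hc_zero ▸ hy).trans_le (hc_mono k.zero_le)
  have hg_nonneg : ∀ x ∈ Ioi (0 : ℝ), 0 ≤ g x := fun x hx ↦
    (hg.antitoneOn_of_integrableOn_Ioi hint).nonneg_of_integrableOn_Ioi hint hx
  have hcont := hg.continuousOn isOpen_Ioi
  have hint_c : IntegrableOn g (Ioi (c 0)) :=
    (((hcont.mono fun x hx ↦ (hc_pos 0).trans_le hx.1).integrableOn_Icc.mono_set
      Ioc_subset_Icc_self).union hint).mono_set Ioi_subset_Ioc_union_Ioi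
  rw [← hc_zero]
  refine tsum_le_setIntegral_Ioi_of_le_intervalIntegral hc_mono
    (fun k ↦ mul_nonneg (hlength_nonneg k) (hg_nonneg _ ?_))
    (ae_restrict_of_forall_mem measurableSet_Ioi fun x hx ↦ hg_nonneg x ((hc_pos 0).trans hx))
    hint_c fun k ↦ ?_
  · rw [← hc_midpoint, mem_Ioi]; linarith [hc_pos k, hc_pos (k + 1)]
  · have hsub : Icc (c k) (c (k + 1)) ⊆ Ioi 0 := fun x hx ↦ (hc_pos k).trans_le hx.1
    rw [← hc_length, ← hc_midpoint]
    exact (hg.subset hsub (convex_Icc _ _)).sub_mul_midpoint_le_intervalIntegral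
      (hc_mono k.le_succ) ((hcont.mono hsub).intervalIntegrable_of_Icc (hc_mono k.le_succ))
end

section
/- Let f_a(x) = e^{−ax}(e^x − 1) − x for x > 0. If a ≤ 1/2 then f_a(x) > 0 for all x > 0; if a ≥ 1 then f_a(x) < 0 for all x > 0. -/
/-! The map `a ↦ e^{-ax}(e^x - 1)` is antitone for `x ≥ 0`, so both claims reduce to the extreme
cases: at `a = 1/2` the expression is `2 sinh (x/2) > x`, and at `a = 1` it is `1 - e^{-x} < x`. -/

open Real

lemma exp_neg_mul_mul_exp_sub_one_antitone {x : ℝ} (hx : 0 ≤ x) :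
    Antitone fun a : ℝ => exp (-a * x) * (exp x - 1) := fun _ _ hab =>
  mul_le_mul_of_nonneg_right (exp_le_exp.mpr (by nlinarith)) (by linarith [one_le_exp hx])

lemma exp_neg_half_mul_mul_exp_sub_one (x : ℝ) :
    exp (-(1 / 2) * x) * (exp x - 1) = 2 * sinh (x / 2) := by
  rw [sinh_eq, mul_sub, ← exp_add]
  ring_nf

lemma lt_exp_neg_half_mul_mul_exp_sub_one {x : ℝ} (hx : 0 < x) :
    x < exp (-(1 / 2) * x) * (exp x - 1) := by
  rw [exp_neg_half_mul_mul_exp_sub_one]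
  linarith [self_lt_sinh_iff.mpr (half_pos hx)]

lemma exp_neg_mul_exp_sub_one_lt {x : ℝ} (hx : 0 < x) :
    exp (-x) * (exp x - 1) < x := by
  rw [mul_sub, ← exp_add, neg_add_cancel, exp_zero, mul_one]
  linarith [add_one_lt_exp (neg_ne_zero.mpr hx.ne')]

theorem f_a_sign (a x : ℝ) (hx : 0 < x) :
    (a ≤ 1 / 2 → 0 < Real.exp (-a * x) * (Real.exp x - 1) - x) ∧
    (1 ≤ a → Real.exp (-a * x) * (Real.exp x - 1) - x < 0) := by
  have hanti := exp_neg_mul_mul_exp_sub_one_antitone hx.le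
  refine ⟨fun ha => ?_, fun ha => ?_⟩
  · linarith [hanti ha, lt_exp_neg_half_mul_mul_exp_sub_one hx]
  · have hone : exp (-1 * x) * (exp x - 1) < x := by
      simpa only [neg_one_mul] using exp_neg_mul_exp_sub_one_lt hx
    linarith [hanti ha]
end

section
/- Let f_a(x) = e^{−ax}(e^x − 1) − x. If 1/2 < a < 1, then f_a does not preserve sign on (0,∞): there exist x₁, x₂ > 0 with f_a(x₁) < 0 < f_a(x₂). -/
/-!
Write `b = 1 - a`. Near `0`, the cubic Taylor bound `eˣ - 1 ≤ x + x²/2 + 2x³/9` (valid on `[0, 1]`)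
against `x e^{ax} ≥ x + a x²` gives `eˣ - 1 < x e^{ax}`, i.e. `f_a(x) < 0`, as soon as
`2x/9 < a - 1/2`; take `x = a - 1/2`.
For large `x`, `f_a(x) = e^{bx} - e^{-ax} - x > e^{bx} - 1 - x ≥ bx + (bx)²/2 - x`, which is
positive at `x = 2/b²`, where `(bx)²/2 = x`.
-/

open Real

theorem Real.exp_le_cubic_of_nonneg_of_le_one {x : ℝ} (h0 : 0 ≤ x) (h1 : x ≤ 1) :
    exp x ≤ 1 + x + x ^ 2 / 2 + 2 / 9 * x ^ 3 := by
  have h := exp_bound' h0 h1 (n := 3) (by norm_num)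
  norm_num [Finset.sum_range_succ, Nat.factorial] at h
  linarith

noncomputable def fa (a x : ℝ) : ℝ := exp (-a * x) * (exp x - 1) - x

lemma fa_eq_exp_neg_mul_mul (a x : ℝ) :
    fa a x = exp (-a * x) * (exp x - 1 - x * exp (a * x)) := by
  rw [fa, mul_sub (exp _) _ (x * _), mul_left_comm, ← exp_add]
  simp

lemma fa_eq_exp_sub_exp_sub (a x : ℝ) :
    fa a x = exp ((1 - a) * x) - exp (-a * x) - x := by
  rw [fa, mul_sub, ← exp_add]
  ring_nf

lemma fa_neg {a x : ℝ} (hx0 : 0 < x) (hx1 : x ≤ 1) (hxa : 2 / 9 * x < a - 1 / 2) :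
    fa a x < 0 := by
  rw [fa_eq_exp_neg_mul_mul]
  refine mul_neg_of_pos_of_neg (exp_pos _) ?_
  have hupper := exp_le_cubic_of_nonneg_of_le_one hx0.le hx1
  have hlower : x * (1 + a * x) ≤ x * exp (a * x) :=
    mul_le_mul_of_nonneg_left (by linarith [add_one_le_exp (a * x)]) hx0.le
  nlinarith [pow_pos hx0 2]

lemma fa_pos {a : ℝ} (ha0 : 0 < a) (ha1 : a < 1) : 0 < fa a (2 / (1 - a) ^ 2) := by
  rw [fa_eq_exp_sub_exp_sub]
  set b := 1 - a
  have hb0 : 0 < b := by linarith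
  have hx0 : 0 < 2 / b ^ 2 := by positivity
  have hquad := quadratic_le_exp_of_nonneg (mul_pos hb0 hx0).le
  have hexp : exp (-a * (2 / b ^ 2)) < 1 := exp_lt_one_iff.mpr (by nlinarith)
  have hbx : b * (2 / b ^ 2) = 2 / b := by field_simp
  have hsq : (b * (2 / b ^ 2)) ^ 2 / 2 = 2 / b ^ 2 := by field_simp
  have hbx_pos : 0 < 2 / b := by positivity
  linarith

theorem f_a_sign_change (a : ℝ) (ha1 : 1 / 2 < a) (ha2 : a < 1) :
    ∃ x₁ x₂ : ℝ, 0 < x₁ ∧ 0 < x₂ ∧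
      Real.exp (-a * x₁) * (Real.exp x₁ - 1) - x₁ < 0 ∧
      0 < Real.exp (-a * x₂) * (Real.exp x₂ - 1) - x₂ := by
  have hb : 0 < 1 - a := by linarith
  exact ⟨a - 1 / 2, 2 / (1 - a) ^ 2, by linarith, by positivity,
    fa_neg (by linarith) (by linarith) (by linarith), fa_pos (by linarith) ha2⟩
end

section
/- The third derivative of F(x) = x/(e^x − 1) is strictly negative for all x > 0; consequently F'' > 0 and F' < 0 on (0,∞). -/
/-!
Writing `E = exp x`, the quotient rule gives `F' = ((1 - x) E - 1) / (E - 1)²`,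
`F'' = E h / (E - 1)³` with `h = (x - 2) E + x + 2`, and `F''' = E g / (E - 1)⁴` with
`g = (3 - x) E² - 4 x E - (x + 3)`. All three signs come from `(1 - x) E < 1`, i.e.
`1 - x < exp (-x)`: it is the numerator of `F'`, `h' = 1 - (1 - x) E`, and `g'' = -4 E h`.
As `h`, `g'` and `g` vanish at `0`, this gives `h > 0`, then `g' < 0`, then `g < 0` on `(0, ∞)`.
-/

open Real Set Filter Topology

lemma lt_of_hasDerivAt_pos {f f' : ℝ → ℝ} {a x : ℝ} (hf : ∀ y, HasDerivAt f (f' y) y)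
    (hf' : ∀ y, a < y → 0 < f' y) (hax : a < x) : f a < f x := by
  refine strictMonoOn_of_hasDerivWithinAt_pos (convex_Ici a)
    (Differentiable.continuous fun y => (hf y).differentiableAt).continuousOn
    (fun y _ => (hf y).hasDerivWithinAt) (fun y hy => hf' y ?_) self_mem_Ici hax.le hax
  rwa [interior_Ici] at hy

lemma lt_of_hasDerivAt_neg {f f' : ℝ → ℝ} {a x : ℝ} (hf : ∀ y, HasDerivAt f (f' y) y)
    (hf' : ∀ y, a < y → f' y < 0) (hax : a < x) : f x < f a := by
  refine strictAntiOn_of_hasDerivWithinAt_neg (convex_Ici a)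
    (Differentiable.continuous fun y => (hf y).differentiableAt).continuousOn
    (fun y _ => (hf y).hasDerivWithinAt) (fun y hy => hf' y ?_) self_mem_Ici hax.le hax
  rwa [interior_Ici] at hy

lemma one_sub_mul_exp_lt_one {x : ℝ} (hx : x ≠ 0) : (1 - x) * exp x < 1 := by
  have h := mul_lt_mul_of_pos_right (one_sub_lt_exp_neg hx) (exp_pos x)
  rwa [← exp_add, neg_add_cancel, exp_zero] at h

lemma two_sub_mul_exp_lt_two_add {x : ℝ} (hx : 0 < x) : (2 - x) * exp x < 2 + x := by
  have hderiv (y : ℝ) :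
      HasDerivAt (fun z => (z - 2) * exp z + z + 2) (1 - (1 - y) * exp y) y := by
    refine (((((hasDerivAt_id' y).sub_const 2).mul (hasDerivAt_exp y)).add
      (hasDerivAt_id' y)).add_const 2).congr_deriv ?_
    ring
  have h := lt_of_hasDerivAt_pos hderiv
    (fun y hy => sub_pos.mpr (one_sub_mul_exp_lt_one hy.ne')) hx
  norm_num at h
  linarith

lemma hasDerivAt_exp_sq (x : ℝ) : HasDerivAt (fun z => exp z ^ 2) (2 * exp x ^ 2) x := by
  refine ((hasDerivAt_exp x).pow 2).congr_deriv ?_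
  norm_num
  ring

lemma five_sub_two_mul_mul_exp_sq_lt {x : ℝ} (hx : 0 < x) :
    (5 - 2 * x) * exp x ^ 2 < 4 * (1 + x) * exp x + 1 := by
  have hderiv (y : ℝ) :
      HasDerivAt (fun z => (5 - 2 * z) * exp z ^ 2 - 4 * (1 + z) * exp z - 1)
        (-4 * exp y * (2 + y - (2 - y) * exp y)) y := by
    refine (((((hasDerivAt_id' y).const_mul 2).const_sub 5).mul (hasDerivAt_exp_sq y)).sub
      ((((hasDerivAt_id' y).const_add 1).const_mul 4).mul (hasDerivAt_exp y))
      |>.sub_const 1).congr_deriv ?_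
    ring
  have h := lt_of_hasDerivAt_neg hderiv (fun y hy => by
    nlinarith [mul_pos (exp_pos y) (sub_pos.mpr (two_sub_mul_exp_lt_two_add hy))]) hx
  norm_num at h
  linarith

lemma three_sub_mul_exp_sq_lt {x : ℝ} (hx : 0 < x) :
    (3 - x) * exp x ^ 2 < 4 * x * exp x + (x + 3) := by
  have hderiv (y : ℝ) :
      HasDerivAt (fun z => (3 - z) * exp z ^ 2 - 4 * z * exp z - (z + 3))
        ((5 - 2 * y) * exp y ^ 2 - 4 * (1 + y) * exp y - 1) y := by
    refine ((((hasDerivAt_id' y).const_sub 3).mul (hasDerivAt_exp_sq y)).sub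
      (((hasDerivAt_id' y).const_mul 4).mul (hasDerivAt_exp y))
      |>.sub ((hasDerivAt_id' y).add_const 3)).congr_deriv ?_
    ring
  have h := lt_of_hasDerivAt_neg hderiv
    (fun y hy => by linarith [five_sub_two_mul_mul_exp_sq_lt hy]) hx
  norm_num at h
  linarith

lemma exp_sub_one_ne_zero {x : ℝ} (hx : x ≠ 0) : exp x - 1 ≠ 0 :=
  sub_ne_zero.mpr ((exp_eq_one_iff x).not.mpr hx)

lemma hasDerivAt_div_exp_sub_one {x : ℝ} (hx : x ≠ 0) :
    HasDerivAt (fun z => z / (exp z - 1)) (((1 - x) * exp x - 1) / (exp x - 1) ^ 2) x := by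
  refine ((hasDerivAt_id' x).div ((hasDerivAt_exp x).sub_const 1)
    (exp_sub_one_ne_zero hx)).congr_deriv ?_
  ring

lemma hasDerivAt_deriv_div_exp_sub_one {x : ℝ} (hx : x ≠ 0) :
    HasDerivAt (fun z => ((1 - z) * exp z - 1) / (exp z - 1) ^ 2)
      (exp x * ((x - 2) * exp x + x + 2) / (exp x - 1) ^ 3) x := by
  have hE := exp_sub_one_ne_zero hx
  refine (((((hasDerivAt_id' x).const_sub 1).mul (hasDerivAt_exp x)).sub_const 1).div
    (((hasDerivAt_exp x).sub_const 1).pow 2) (pow_ne_zero 2 hE)).congr_deriv ?_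
  simp only [Pi.mul_apply, Pi.pow_apply]
  field_simp
  ring

lemma hasDerivAt_iteratedDeriv_two_div_exp_sub_one {x : ℝ} (hx : x ≠ 0) :
    HasDerivAt (fun z => exp z * ((z - 2) * exp z + z + 2) / (exp z - 1) ^ 3)
      (exp x * ((3 - x) * exp x ^ 2 - 4 * x * exp x - (x + 3)) / (exp x - 1) ^ 4) x := by
  have hE := exp_sub_one_ne_zero hx
  refine (((hasDerivAt_exp x).mul (((((hasDerivAt_id' x).sub_const 2).mul
    (hasDerivAt_exp x)).add (hasDerivAt_id' x)).add_const 2)).div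
    (((hasDerivAt_exp x).sub_const 1).pow 3) (pow_ne_zero 3 hE)).congr_deriv ?_
  simp only [Pi.add_apply, Pi.mul_apply, Pi.pow_apply]
  field_simp
  ring

lemma deriv_div_exp_sub_one {x : ℝ} (hx : x ≠ 0) :
    deriv (fun z => z / (exp z - 1)) x = ((1 - x) * exp x - 1) / (exp x - 1) ^ 2 :=
  (hasDerivAt_div_exp_sub_one hx).deriv

lemma iteratedDeriv_two_div_exp_sub_one {x : ℝ} (hx : x ≠ 0) :
    iteratedDeriv 2 (fun z => z / (exp z - 1)) x =
      exp x * ((x - 2) * exp x + x + 2) / (exp x - 1) ^ 3 := by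
  have h : deriv (fun z => z / (exp z - 1)) =ᶠ[𝓝 x]
      fun z => ((1 - z) * exp z - 1) / (exp z - 1) ^ 2 :=
    (eventually_ne_nhds hx).mono fun z hz => deriv_div_exp_sub_one hz
  rw [iteratedDeriv_succ, iteratedDeriv_one, h.deriv_eq]
  exact (hasDerivAt_deriv_div_exp_sub_one hx).deriv

lemma iteratedDeriv_three_div_exp_sub_one {x : ℝ} (hx : x ≠ 0) :
    iteratedDeriv 3 (fun z => z / (exp z - 1)) x =
      exp x * ((3 - x) * exp x ^ 2 - 4 * x * exp x - (x + 3)) / (exp x - 1) ^ 4 := by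
  have h : iteratedDeriv 2 (fun z => z / (exp z - 1)) =ᶠ[𝓝 x]
      fun z => exp z * ((z - 2) * exp z + z + 2) / (exp z - 1) ^ 3 :=
    (eventually_ne_nhds hx).mono fun z hz => iteratedDeriv_two_div_exp_sub_one hz
  rw [iteratedDeriv_succ, h.deriv_eq]
  exact (hasDerivAt_iteratedDeriv_two_div_exp_sub_one hx).deriv

theorem third_deriv_neg (x : ℝ) (hx : 0 < x) :
    iteratedDeriv 3 (fun y : ℝ => y / (Real.exp y - 1)) x < 0 ∧
    0 < iteratedDeriv 2 (fun y : ℝ => y / (Real.exp y - 1)) x ∧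
    deriv (fun y : ℝ => y / (Real.exp y - 1)) x < 0 := by
  have hE : 0 < exp x - 1 := by linarith [add_one_lt_exp hx.ne']
  rw [iteratedDeriv_three_div_exp_sub_one hx.ne', iteratedDeriv_two_div_exp_sub_one hx.ne',
    deriv_div_exp_sub_one hx.ne']
  refine ⟨div_neg_of_neg_of_pos ?_ (by positivity), div_pos ?_ (by positivity),
    div_neg_of_neg_of_pos ?_ (by positivity)⟩
  · exact mul_neg_of_pos_of_neg (exp_pos x) (by linarith [three_sub_mul_exp_sq_lt hx])
  · exact mul_pos (exp_pos x) (by linarith [two_sub_mul_exp_lt_two_add hx])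
  · linarith [one_sub_mul_exp_lt_one hx.ne']
end

section
/- For every μ > 0 and every (p,t) ∈ ℝ² with not (p = 0 and t ≤ 0), and every ν > μ, ∫_t^∞ y·|y²−t²|^{ν−μ−1}/(p²+y²)^ν dy = (B(ν−μ, μ)/2)·1/(p²+t²)^μ, where B is the Beta function. -/
/-!
For `t ≥ 0` the substitution `u = y² - t²` turns the integral into
`½ ∫₀^∞ u^(ν-μ-1) / (p² + t² + u)^ν du`, and `x = u / (p² + t² + u)` turns this into
`(p² + t²)^(-μ)` times the Beta integral `∫₀¹ x^(ν-μ-1) (1-x)^(μ-1) dx = B(ν-μ, μ)`.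
For `t < 0` the integrand is odd in `y` and integrable near `0` (there `p ≠ 0`), so its integral
over `(t, -t)` vanishes and the integral over `(t, ∞)` equals the one over `(-t, ∞)`.
-/

open MeasureTheory Set Real

lemma Complex.betaIntegral_ofReal (u v : ℝ) :
    betaIntegral u v = ↑(∫ x in (0 : ℝ)..1, x ^ (u - 1) * (1 - x) ^ (v - 1)) := by
  rw [betaIntegral, ← intervalIntegral.integral_ofReal]
  refine intervalIntegral.integral_congr fun x hx => ?_
  rw [uIcc_of_le zero_le_one] at hx
  push_cast
  rw [← ofReal_one, ← ofReal_sub, ofReal_cpow hx.1, ofReal_cpow (sub_nonneg.2 hx.2)]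
  push_cast
  rfl

lemma integral_rpow_mul_one_sub_rpow {u v : ℝ} (hu : 0 < u) (hv : 0 < v) :
    ∫ x in (0 : ℝ)..1, x ^ (u - 1) * (1 - x) ^ (v - 1) = Gamma u * Gamma v / Gamma (u + v) := by
  have h := Complex.betaIntegral_eq_Gamma_mul_div u v (by simpa) (by simpa)
  rw [Complex.betaIntegral_ofReal, ← Complex.ofReal_add, Complex.Gamma_ofReal,
    Complex.Gamma_ofReal, Complex.Gamma_ofReal] at h
  exact_mod_cast h

lemma integral_Ioi_rpow_div_add_rpow {a c d : ℝ} (ha : 0 < a) (hc : 0 < c) (hd : 0 < d) :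
    ∫ u in Ioi 0, u ^ (c - 1) / (a + u) ^ (c + d)
      = Gamma c * Gamma d / Gamma (c + d) / a ^ d := by
  have himage : (fun u => u / (a + u)) '' Ioi 0 = Ioo 0 1 := by
    ext x
    constructor
    · rintro ⟨u, hu, rfl⟩
      have hu : 0 < u := hu
      exact ⟨by positivity, (div_lt_one (by positivity)).2 (by linarith)⟩
    · rintro ⟨hx0, hx1⟩
      refine ⟨a * x / (1 - x), by simp only [mem_Ioi]; have := sub_pos.2 hx1; positivity, ?_⟩
      have := (sub_pos.2 hx1).ne'
      field_simp
      ring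
  have hinj : InjOn (fun u => u / (a + u)) (Ioi 0) := by
    intro u (hu : 0 < u) v (hv : 0 < v) huv
    have := ha.ne'
    field_simp at huv
    nlinarith
  have hderiv : ∀ u ∈ Ioi 0,
      HasDerivWithinAt (fun u => u / (a + u)) (a / (a + u) ^ 2) (Ioi 0) u := by
    intro u (hu : 0 < u)
    have hau : a + u ≠ 0 := by positivity
    exact ((hasDerivAt_id' u).div ((hasDerivAt_id' u).const_add a) hau).hasDerivWithinAt
      |>.congr_deriv (by ring)
  have hbeta := integral_rpow_mul_one_sub_rpow hc hd
  rw [intervalIntegral.integral_of_le zero_le_one, integral_Ioc_eq_integral_Ioo, ← himage,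
    integral_image_eq_integral_abs_deriv_smul measurableSet_Ioi hderiv hinj] at hbeta
  rw [← hbeta, ← integral_div]
  refine setIntegral_congr_fun measurableSet_Ioi fun u (hu : 0 < u) => ?_
  have hau : 0 < a + u := by positivity
  rw [show 1 - u / (a + u) = a / (a + u) by field_simp; ring, abs_of_pos (by positivity),
    smul_eq_mul, div_rpow hu.le hau.le, div_rpow ha.le hau.le, rpow_sub_one hu.ne',
    rpow_sub_one ha.ne', rpow_sub_one hau.ne', rpow_sub_one hau.ne', rpow_add hau]
  field_simp

lemma integral_Ioi_mul_comp_sq_sub_sq {s : ℝ} (hs : 0 ≤ s) (g : ℝ → ℝ) :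
    ∫ y in Ioi s, y * g (y ^ 2 - s ^ 2) = (∫ u in Ioi 0, g u) / 2 := by
  have himage : (fun y => y ^ 2 - s ^ 2) '' Ioi s = Ioi 0 := by
    ext u
    constructor
    · rintro ⟨y, hy, rfl⟩
      have hy : s < y := hy
      simp only [mem_Ioi]
      nlinarith
    · intro (hu : 0 < u)
      refine ⟨√(u + s ^ 2), (lt_sqrt hs).2 (by linarith), ?_⟩
      simp only
      rw [sq_sqrt (by positivity)]
      ring
  have hinj : InjOn (fun y => y ^ 2 - s ^ 2) (Ioi s) := by
    intro y (hy : s < y) z (hz : s < z) hyz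
    simp only at hyz
    nlinarith
  have hderiv : ∀ y ∈ Ioi s, HasDerivWithinAt (fun y => y ^ 2 - s ^ 2) (2 * y) (Ioi s) y := by
    intro y _
    simpa using ((hasDerivAt_pow 2 y).sub_const (s ^ 2)).hasDerivWithinAt
  rw [← himage, integral_image_eq_integral_abs_deriv_smul measurableSet_Ioi hderiv hinj,
    ← integral_div]
  refine setIntegral_congr_fun measurableSet_Ioi fun y (hy : s < y) => ?_
  rw [abs_of_pos (by linarith), smul_eq_mul]
  ring

lemma intervalIntegrable_mul_abs_sq_sub_sq_rpow {r s : ℝ} (hr : 0 < r) (hs : 0 ≤ s) :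
    IntervalIntegrable (fun y => y * |y ^ 2 - s ^ 2| ^ (r - 1)) volume 0 s := by
  rw [intervalIntegrable_iff_integrableOn_Ioc_of_le hs]
  have hcont : ContinuousOn (fun y => (s ^ 2 - y ^ 2) ^ r / -(2 * r)) (Icc 0 s) :=
    ((continuous_const.sub (continuous_pow 2)).rpow_const fun _ => Or.inr hr.le).div_const
      _ |>.continuousOn
  have hderiv : ∀ y ∈ Ioo 0 s,
      HasDerivAt (fun y => (s ^ 2 - y ^ 2) ^ r / -(2 * r)) (y * (s ^ 2 - y ^ 2) ^ (r - 1)) y := by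
    rintro y ⟨hy0, hys⟩
    have hbase : s ^ 2 - y ^ 2 ≠ 0 := by nlinarith
    exact (((hasDerivAt_pow 2 y).const_sub (s ^ 2)).rpow_const (Or.inl hbase)).div_const
      (-(2 * r)) |>.congr_deriv (by norm_num; field_simp)
  have hpos : ∀ y ∈ Ioo 0 s, 0 ≤ y * (s ^ 2 - y ^ 2) ^ (r - 1) := by
    rintro y ⟨hy0, hys⟩
    have : 0 ≤ s ^ 2 - y ^ 2 := by nlinarith
    positivity
  refine (intervalIntegral.integrableOn_deriv_of_nonneg hcont hderiv hpos).congr_fun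
    (fun y ⟨hy0, hys⟩ => ?_) measurableSet_Ioc
  rw [abs_sub_comm, abs_of_nonneg (by nlinarith)]

lemma integral_Ioi_neg_eq_of_odd {E : Type*} [NormedAddCommGroup E] [NormedSpace ℝ E]
    {f : ℝ → E} {s : ℝ} (hodd : f.Odd) (hf₀ : IntervalIntegrable f volume 0 s)
    (hf : IntegrableOn f (Ioi s)) :
    ∫ x in Ioi (-s), f x = ∫ x in Ioi s, f x := by
  have hsym : IntervalIntegrable f volume (-s) s := by
    refine IntervalIntegrable.trans ?_ hf₀
    rw [IntervalIntegrable.iff_comp_neg (by finiteness)]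
    simp only [hodd _, neg_neg, neg_zero]
    exact hf₀.neg.symm
  have hzero : ∫ x in -s..s, f x = 0 := by
    have h := intervalIntegral.integral_comp_neg (a := -s) (b := s) f
    simp only [hodd _, intervalIntegral.integral_neg, neg_neg] at h
    have h2 : (2 : ℝ) • ∫ x in -s..s, f x = 0 := by
      rw [two_smul]
      nth_rw 1 [← h]
      exact neg_add_cancel _
    exact (smul_eq_zero.1 h2).resolve_left two_ne_zero
  rw [← intervalIntegral.integral_interval_add_Ioi' hsym hf, hzero, zero_add]

lemma odd_mul_abs_sq_sub_sq_rpow_div (μ ν p s : ℝ) :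
    (fun y => y * |y ^ 2 - s ^ 2| ^ (ν - μ - 1) / (p ^ 2 + y ^ 2) ^ ν).Odd := by
  intro y
  simp only [neg_sq, neg_mul, neg_div]

section Kernel

variable {μ ν p : ℝ}

lemma integral_Ioi_mul_abs_sq_sub_sq_rpow_div {s : ℝ} (hμ : 0 < μ) (hν : μ < ν) (hs : 0 ≤ s)
    (ha : 0 < p ^ 2 + s ^ 2) :
    ∫ y in Ioi s, y * |y ^ 2 - s ^ 2| ^ (ν - μ - 1) / (p ^ 2 + y ^ 2) ^ ν
      = Gamma (ν - μ) * Gamma μ / Gamma ν / 2 * (1 / (p ^ 2 + s ^ 2) ^ μ) := by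
  have hcomp : ∀ y, y * |y ^ 2 - s ^ 2| ^ (ν - μ - 1) / (p ^ 2 + y ^ 2) ^ ν
      = y * (|y ^ 2 - s ^ 2| ^ (ν - μ - 1) / (p ^ 2 + s ^ 2 + (y ^ 2 - s ^ 2)) ^ ν) := by
    intro y
    rw [mul_div_assoc, add_add_sub_cancel]
  have hpos : ∀ u ∈ Ioi (0 : ℝ), |u| ^ (ν - μ - 1) / (p ^ 2 + s ^ 2 + u) ^ ν
      = u ^ (ν - μ - 1) / (p ^ 2 + s ^ 2 + u) ^ (ν - μ + μ) := by
    intro u (hu : 0 < u)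
    rw [abs_of_pos hu, sub_add_cancel]
  simp_rw [hcomp]
  rw [integral_Ioi_mul_comp_sq_sub_sq hs (fun u => |u| ^ (ν - μ - 1) / (p ^ 2 + s ^ 2 + u) ^ ν),
    setIntegral_congr_fun measurableSet_Ioi hpos,
    integral_Ioi_rpow_div_add_rpow ha (sub_pos.2 hν) hμ, sub_add_cancel]
  ring

lemma integrableOn_Ioi_mul_abs_sq_sub_sq_rpow_div {s : ℝ} (hμ : 0 < μ) (hν : μ < ν)
    (hs : 0 ≤ s) (ha : 0 < p ^ 2 + s ^ 2) :
    IntegrableOn (fun y => y * |y ^ 2 - s ^ 2| ^ (ν - μ - 1) / (p ^ 2 + y ^ 2) ^ ν) (Ioi s) := by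
  -- a function that is not integrable has integral `0`
  refine Integrable.of_integral_ne_zero ?_
  rw [integral_Ioi_mul_abs_sq_sub_sq_rpow_div hμ hν hs ha]
  have := Gamma_pos_of_pos (sub_pos.2 hν)
  have := Gamma_pos_of_pos hμ
  have := Gamma_pos_of_pos (hμ.trans hν)
  positivity

lemma intervalIntegrable_mul_abs_sq_sub_sq_rpow_div {s : ℝ} (hμ : 0 < μ) (hν : μ < ν)
    (hp : p ≠ 0) (hs : 0 ≤ s) :
    IntervalIntegrable (fun y => y * |y ^ 2 - s ^ 2| ^ (ν - μ - 1) / (p ^ 2 + y ^ 2) ^ ν)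
      volume 0 s := by
  refine ((intervalIntegrable_mul_abs_sq_sub_sq_rpow (sub_pos.2 hν) hs).div_const
    ((p ^ 2) ^ ν)).mono_fun' (by fun_prop : Measurable _).aestronglyMeasurable ?_
  rw [uIoc_of_le hs]
  refine (ae_restrict_iff' measurableSet_Ioc).2 (Filter.Eventually.of_forall fun y ⟨hy0, _⟩ => ?_)
  dsimp only
  rw [Real.norm_of_nonneg (by positivity)]
  gcongr
  · linarith
  · exact le_add_of_nonneg_right (sq_nonneg y)

end Kernel

theorem beta_integral_identity (μ ν p t : ℝ) (hμ : 0 < μ) (hν : μ < ν)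
    (hpt : ¬(p = 0 ∧ t ≤ 0)) :
    (∫ y in Set.Ioi t, y * |y ^ 2 - t ^ 2| ^ (ν - μ - 1) / ((p ^ 2 + y ^ 2) ^ ν))
      = (Real.Gamma (ν - μ) * Real.Gamma μ / Real.Gamma ν) / 2
          * (1 / ((p ^ 2 + t ^ 2) ^ μ)) := by
  rcases le_or_gt 0 t with ht | ht
  · have ha : 0 < p ^ 2 + t ^ 2 := by
      rcases eq_or_ne p 0 with rfl | hp
      · have : t ≠ 0 := fun h => hpt ⟨rfl, h.le⟩
        positivity
      · positivity
    exact integral_Ioi_mul_abs_sq_sub_sq_rpow_div hμ hν ht ha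
  · have hp : p ≠ 0 := fun hp => hpt ⟨hp, ht.le⟩
    have hs : 0 ≤ -t := by linarith
    have ha : 0 < p ^ 2 + (-t) ^ 2 := by positivity
    have h := integral_Ioi_neg_eq_of_odd (odd_mul_abs_sq_sub_sq_rpow_div μ ν p (-t))
      (intervalIntegrable_mul_abs_sq_sub_sq_rpow_div hμ hν hp hs)
      (integrableOn_Ioi_mul_abs_sq_sub_sq_rpow_div hμ hν hs ha)
    rw [integral_Ioi_mul_abs_sq_sub_sq_rpow_div hμ hν hs ha, neg_neg, neg_sq] at h
    exact h
end

section
/- For every u ≥ 0, the function x ↦ −(ln φ_u(x))/x, where φ_u(x) = x·∑_{k=1}^∞ 2(k+u)e^{−(k+u)²x}, has limit u²+u+1/6 as x → 0⁺ and limit (u+1)² as x → +∞. -/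
/-!
Put `a = u + 1` and `f(t) = 2xt e^{-xt²} = -(d/dt) e^{-xt²}`, so that `φ_u(x) = ∑_{k ≥ 0} f(a + k)`.

Near `0`: third-order Euler–Maclaurin summation gives
`φ_u(x) = ∫_a^∞ f + f(a)/2 - f'(a)/12 + R = (1 + (a - 1/6)x + a²x²/3) e^{-a²x} + R`
with `|R| ≤ ∫ |f'''| / 12`, and the substitution `t = s / √x` shows `∫ |f'''| = O(x^{3/2})`.
Hence `φ_u(x) = 1 - (u² + u + 1/6)x + o(x)`, while `log y = (y - 1)(1 + o(1))` as `y → 1`.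

Near `∞`: for `x ≥ 1` the `k`-th term is at most `e^{-k}` times the first one, so
`φ_u(x) = Θ(x e^{-a²x})` and `-log φ_u(x) / x = a² + O(log x / x)`.
-/

open Real Filter Topology MeasureTheory Set

/-- `B₃(s) / 3!`, the kernel of the third-order Euler–Maclaurin remainder. -/
noncomputable def cubicBernoulli (s : ℝ) : ℝ := s ^ 3 / 6 - s ^ 2 / 4 + s / 12

lemma abs_cubicBernoulli_le {s : ℝ} (h₀ : 0 ≤ s) (h₁ : s ≤ 1) : |cubicBernoulli s| ≤ 1 / 12 := by
  have h : cubicBernoulli s = s * (s - 1) * (2 * s - 1) / 12 := by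
    unfold cubicBernoulli; ring
  rw [h, abs_div, abs_mul, abs_mul, abs_of_pos (by norm_num : (0 : ℝ) < 12)]
  gcongr
  calc |s| * |s - 1| * |2 * s - 1| ≤ 1 * 1 * 1 := by
        gcongr <;> rw [abs_le] <;> constructor <;> linarith
    _ = 1 := by norm_num

lemma abs_integral_mul_cubicBernoulli_le {g : ℝ → ℝ} (hg : Continuous g) (b : ℝ) :
    |∫ t in b..b + 1, g t * cubicBernoulli (t - b)| ≤ (∫ t in b..b + 1, |g t|) / 12 := by
  have hb : b ≤ b + 1 := by linarith
  have hH : Continuous fun t => cubicBernoulli (t - b) := by unfold cubicBernoulli; fun_prop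
  rw [← intervalIntegral.integral_div]
  refine (intervalIntegral.abs_integral_le_integral_abs hb).trans
    (intervalIntegral.integral_mono_on hb ((hg.mul hH).abs.intervalIntegrable _ _)
      ((hg.abs.div_const _).intervalIntegrable _ _) fun t ht => ?_)
  rw [abs_mul, div_eq_mul_one_div]
  exact mul_le_mul_of_nonneg_left
    (abs_cubicBernoulli_le (by linarith [ht.1]) (by linarith [ht.2])) (abs_nonneg _)

lemma abs_sum_integral_mul_cubicBernoulli_le {g : ℝ → ℝ} (hg : Continuous g) {a : ℝ}
    (hgi : IntegrableOn g (Ioi a)) (n : ℕ) :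
    |∑ k ∈ Finset.range n, ∫ t in a + k..a + k + 1, g t * cubicBernoulli (t - (a + k))| ≤
      (∫ t in Ioi a, |g t|) / 12 := by
  have hadj : ∑ k ∈ Finset.range n, ∫ t in a + k..a + k + 1, |g t| = ∫ t in a..a + n, |g t| := by
    have := intervalIntegral.sum_integral_adjacent_intervals (f := fun t => |g t|) (μ := volume)
      (a := fun k : ℕ => a + k) (n := n) fun k _ => hg.abs.intervalIntegrable _ _
    simpa [add_assoc] using this
  calc _ ≤ ∑ k ∈ Finset.range n, |∫ t in a + k..a + k + 1, g t * cubicBernoulli (t - (a + k))| :=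
        Finset.abs_sum_le_sum_abs _ _
    _ ≤ ∑ k ∈ Finset.range n, (∫ t in a + k..a + k + 1, |g t|) / 12 :=
        Finset.sum_le_sum fun k _ => abs_integral_mul_cubicBernoulli_le hg _
    _ = (∫ t in Ioc a (a + n), |g t|) / 12 := by
        rw [← Finset.sum_div, hadj, intervalIntegral.integral_of_le (by simp)]
    _ ≤ (∫ t in Ioi a, |g t|) / 12 :=
        div_le_div_of_nonneg_right (setIntegral_mono_set hgi.abs
          (ae_of_all _ fun t => abs_nonneg _) Ioc_subset_Ioi_self.eventuallyLE) (by norm_num)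

section EulerMaclaurin

variable {G f f₁ f₂ f₃ : ℝ → ℝ}
  (hG : ∀ t, HasDerivAt G (f t) t) (hf : ∀ t, HasDerivAt f (f₁ t) t)
  (hf₁ : ∀ t, HasDerivAt f₁ (f₂ t) t) (hf₂ : ∀ t, HasDerivAt f₂ (f₃ t) t)
  (hf₃ : Continuous f₃)
include hG hf hf₁ hf₂ hf₃

theorem integral_mul_cubicBernoulli (b : ℝ) :
    ∫ t in b..b + 1, f₃ t * cubicBernoulli (t - b) =
      G b - G (b + 1) + (f b + f (b + 1)) / 2 - (f₁ (b + 1) - f₁ b) / 12 := by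
  have hH : ∀ t, HasDerivAt (fun t => cubicBernoulli (t - b))
      ((t - b) ^ 2 / 2 - (t - b) / 2 + 1 / 12) t := fun t => by
    have hs := (hasDerivAt_id' t).sub_const b
    exact ((((hs.pow 3).div_const 6).sub ((hs.pow 2).div_const 4)).add
      (hs.div_const 12)).congr_deriv (by push_cast; ring)
  have hH' : ∀ t, HasDerivAt (fun t => (t - b) ^ 2 / 2 - (t - b) / 2 + 1 / 12) (t - b - 1 / 2) t :=
    fun t => by
    have hs := (hasDerivAt_id' t).sub_const b
    exact ((((hs.pow 2).div_const 2).sub (hs.div_const 2)).add_const _).congr_deriv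
      (by push_cast; ring)
  have hΦ : ∀ t, HasDerivAt (fun t => f₂ t * cubicBernoulli (t - b) -
      f₁ t * ((t - b) ^ 2 / 2 - (t - b) / 2 + 1 / 12) + f t * (t - b - 1 / 2) - G t)
      (f₃ t * cubicBernoulli (t - b)) t := fun t =>
    (((((hf₂ t).mul (hH t)).sub ((hf₁ t).mul (hH' t))).add
      ((hf t).mul (((hasDerivAt_id' t).sub_const b).sub_const _))).sub (hG t)).congr_deriv
      (by ring)
  have hH_cont : Continuous fun t => cubicBernoulli (t - b) :=
    continuous_iff_continuousAt.2 fun t => (hH t).continuousAt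
  rw [intervalIntegral.integral_eq_sub_of_hasDerivAt (fun t _ => hΦ t)
    ((hf₃.mul hH_cont).intervalIntegrable _ _)]
  simp only [cubicBernoulli]
  ring

theorem sum_range_eq_euler_maclaurin (a : ℝ) (n : ℕ) :
    ∑ k ∈ Finset.range n, f (a + k) =
      G (a + n) - G a + (f a - f (a + n)) / 2 + (f₁ (a + n) - f₁ a) / 12 +
        ∑ k ∈ Finset.range n, ∫ t in a + k..a + k + 1, f₃ t * cubicBernoulli (t - (a + k)) := by
  induction n with
  | zero => simp
  | succ n ih =>
    rw [Finset.sum_range_succ, Finset.sum_range_succ, ih,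
      integral_mul_cubicBernoulli hG hf hf₁ hf₂ hf₃]
    simp only [Nat.cast_succ, ← add_assoc]
    ring

theorem abs_tsum_sub_le_euler_maclaurin {a : ℝ} (hf₃i : IntegrableOn f₃ (Ioi a))
    (hs : Summable fun k : ℕ => f (a + k))
    (hGt : Tendsto (fun n : ℕ => G (a + n)) atTop (𝓝 0))
    (hf₁t : Tendsto (fun n : ℕ => f₁ (a + n)) atTop (𝓝 0)) :
    |∑' k : ℕ, f (a + k) - (f a / 2 - G a - f₁ a / 12)| ≤ (∫ t in Ioi a, |f₃ t|) / 12 := by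
  have hlim := hs.hasSum.tendsto_sum_nat.sub (((hGt.sub_const (G a)).add
    (((tendsto_const_nhds (x := f a)).sub hs.tendsto_atTop_zero).div_const 2)).add
    ((hf₁t.sub_const (f₁ a)).div_const 12))
  have hR : Tendsto (fun n => ∑ k ∈ Finset.range n,
      ∫ t in a + k..a + k + 1, f₃ t * cubicBernoulli (t - (a + k))) atTop
      (𝓝 (∑' k : ℕ, f (a + k) - (f a / 2 - G a - f₁ a / 12))) := by
    convert hlim using 2 with n
    · rw [sum_range_eq_euler_maclaurin hG hf hf₁ hf₂ hf₃]
      ring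
    · ring
  exact le_of_tendsto' hR.abs fun n => abs_sum_integral_mul_cubicBernoulli_le hf₃ hf₃i n

end EulerMaclaurin

theorem tendsto_log_div_of_tendsto_sub_one_div {F : ℝ → ℝ} {l : Filter ℝ} {c : ℝ}
    (hl : l ≤ 𝓝[≠] 0) (h : Tendsto (fun x => (F x - 1) / x) l (𝓝 c)) :
    Tendsto (fun x => log (F x) / x) l (𝓝 c) := by
  have hF : Tendsto F l (𝓝 1) := by
    have hx : Tendsto (fun x : ℝ => x) l (𝓝 0) := tendsto_id.mono_left (hl.trans nhdsWithin_le_nhds)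
    have := (h.mul hx).add_const 1
    rw [mul_zero, zero_add] at this
    refine this.congr' (Filter.mem_of_superset (hl self_mem_nhdsWithin) fun x (hx : x ≠ 0) => ?_)
    show (F x - 1) / x * x + 1 = F x
    rw [div_mul_cancel₀ _ hx, sub_add_cancel]
  -- `log y = (y - 1) * dslope log 1 y`, and `dslope log 1` is continuous at `1` with value `1`.
  have hslope : Tendsto (dslope log 1) (𝓝 1) (𝓝 1) := by
    have := (continuousAt_dslope_same.2 (differentiableAt_log one_ne_zero)).tendsto
    rwa [dslope_same, deriv_log, inv_one] at this
  have := (hslope.comp hF).mul h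
  rw [one_mul] at this
  refine this.congr fun x => ?_
  have hlog := sub_smul_dslope log 1 (F x)
  rw [smul_eq_mul, log_one, sub_zero] at hlog
  rw [Function.comp_apply, ← hlog]
  ring

lemma tendsto_neg_log_mul_exp_div_atTop {c : ℝ} (hc : 0 < c) (b : ℝ) :
    Tendsto (fun x => -log (c * (x * exp (-b * x))) / x) atTop (𝓝 b) := by
  have hlim : Tendsto (fun x => b - (log c / x + log x / x)) atTop (𝓝 (b - (0 + 0))) :=
    tendsto_const_nhds.sub ((tendsto_const_nhds.div_atTop tendsto_id).add
      isLittleO_log_id_atTop.tendsto_div_nhds_zero)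
  rw [add_zero, sub_zero] at hlim
  refine hlim.congr' ((eventually_gt_atTop 0).mono fun x (hx : 0 < x) => ?_)
  dsimp only
  rw [log_mul hc.ne' (by positivity), log_mul hx.ne' (exp_pos _).ne', log_exp]
  field_simp
  ring

theorem tendsto_neg_log_div_atTop_of_le_of_le {F : ℝ → ℝ} {b c₁ c₂ : ℝ} (hc₁ : 0 < c₁)
    (h₁ : ∀ᶠ x in atTop, c₁ * (x * exp (-b * x)) ≤ F x)
    (h₂ : ∀ᶠ x in atTop, F x ≤ c₂ * (x * exp (-b * x))) :
    Tendsto (fun x => -log (F x) / x) atTop (𝓝 b) := by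
  have h := (h₁.and h₂).and (eventually_gt_atTop 0)
  obtain ⟨y, ⟨hy₁, hy₂⟩, hy⟩ := h.exists
  have hc₂ : 0 < c₂ := pos_of_mul_pos_left ((mul_pos hc₁ (by positivity)).trans_le (hy₁.trans hy₂))
    (by positivity)
  refine tendsto_of_tendsto_of_tendsto_of_le_of_le' (tendsto_neg_log_mul_exp_div_atTop hc₂ b)
    (tendsto_neg_log_mul_exp_div_atTop hc₁ b) (h.mono fun x ⟨⟨hx₁, hx₂⟩, hx⟩ => ?_)
    (h.mono fun x ⟨⟨hx₁, _⟩, hx⟩ => ?_)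
  · have hF : 0 < F x := (by positivity : 0 < c₁ * (x * exp (-b * x))).trans_le hx₁
    gcongr
  · gcongr

lemma hasDerivAt_mul_exp_neg_sq_mul {P : ℝ → ℝ} {p : ℝ} (x t : ℝ) (hP : HasDerivAt P p t) :
    HasDerivAt (fun s => P s * exp (-s ^ 2 * x)) ((p - 2 * t * x * P t) * exp (-t ^ 2 * x)) t :=
  (hP.mul ((hasDerivAt_pow 2 t).fun_neg.mul_const x).exp).congr_deriv (by push_cast; ring)

lemma summable_pow_mul_exp_neg_sq_mul {a x : ℝ} (ha : 0 ≤ a) (hx : 0 < x) (n : ℕ) :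
    Summable fun k : ℕ => (a + k) ^ n * exp (-(a + k) ^ 2 * x) := by
  have hg := (summable_nat_add_iff 1).2 (summable_pow_mul_exp_neg_nat_mul n hx)
  refine (hg.mul_left ((1 + a) ^ n * exp x)).of_nonneg_of_le
    (fun k => mul_nonneg (pow_nonneg (by positivity) n) (exp_pos _).le) fun k => ?_
  have hk : (k : ℝ) ≤ (k : ℝ) ^ 2 := by exact_mod_cast Nat.le_self_pow two_ne_zero k
  have hak : (k : ℝ) ≤ (a + k) ^ 2 := by nlinarith
  push_cast
  calc (a + k) ^ n * exp (-(a + k) ^ 2 * x)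
      ≤ ((1 + a) * (k + 1)) ^ n * exp (x + -x * (k + 1)) :=
        mul_le_mul (pow_le_pow_left₀ (by positivity) (by nlinarith) n)
          (exp_le_exp.2 (by nlinarith [mul_le_mul_of_nonneg_right hak hx.le])) (exp_pos _).le
          (by positivity)
    _ = _ := by rw [mul_pow, exp_add]; ring

lemma summable_mul_exp_neg_sq_mul {a x : ℝ} (ha : 0 ≤ a) (hx : 0 < x) :
    Summable fun k : ℕ => 2 * (a + k) * x * exp (-(a + k) ^ 2 * x) :=
  ((summable_pow_mul_exp_neg_sq_mul ha hx 1).mul_left (2 * x)).congr fun k => by ring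

lemma integrable_quartic_mul_exp_neg_sq :
    Integrable fun s : ℝ => (-16 * s ^ 4 + 48 * s ^ 2 - 12) * exp (-s ^ 2) := by
  have h : ∀ n : ℕ, Integrable fun s : ℝ => s ^ n * exp (-1 * s ^ 2) := fun n => by
    simpa only [rpow_natCast] using integrable_rpow_mul_exp_neg_mul_sq one_pos
      (by linarith [(n.cast_nonneg : (0 : ℝ) ≤ n)] : (-1 : ℝ) < n)
  refine ((((h 4).const_mul (-16)).add ((h 2).const_mul 48)).sub ((h 0).const_mul 12)).congr
    (ae_of_all _ fun s => ?_)
  simp only [Pi.add_apply, Pi.sub_apply, neg_one_mul]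
  ring

lemma gaussian_third_deriv_eq_scaling {x : ℝ} (hx : 0 < x) (t : ℝ) :
    (-16 * t ^ 4 * x ^ 4 + 48 * t ^ 2 * x ^ 3 - 12 * x ^ 2) * exp (-t ^ 2 * x) =
      x ^ 2 * ((-16 * (√x * t) ^ 4 + 48 * (√x * t) ^ 2 - 12) * exp (-(√x * t) ^ 2)) := by
  have h₂ : (√x * t) ^ 2 = t ^ 2 * x := by rw [mul_pow, sq_sqrt hx.le, mul_comm]
  have h₄ : (√x * t) ^ 4 = (t ^ 2 * x) ^ 2 := by rw [← h₂, ← pow_mul]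
  rw [h₂, h₄, neg_mul (t ^ 2) x]
  ring

lemma integral_abs_gaussian_third_deriv {x : ℝ} (hx : 0 < x) :
    ∫ t, |(-16 * t ^ 4 * x ^ 4 + 48 * t ^ 2 * x ^ 3 - 12 * x ^ 2) * exp (-t ^ 2 * x)| =
      x * √x * ∫ s, |(-16 * s ^ 4 + 48 * s ^ 2 - 12) * exp (-s ^ 2)| := by
  simp_rw [gaussian_third_deriv_eq_scaling hx, abs_mul (x ^ 2), abs_of_nonneg (sq_nonneg x)]
  rw [integral_const_mul, Measure.integral_comp_mul_left (fun s =>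
    |(-16 * s ^ 4 + 48 * s ^ 2 - 12) * exp (-s ^ 2)|), smul_eq_mul,
    abs_of_pos (inv_pos.2 (sqrt_pos.2 hx)), ← mul_assoc]
  congr 1
  rw [← div_eq_mul_inv, pow_two, mul_div_assoc, div_sqrt]

theorem abs_tsum_sub_le_gaussian {a x : ℝ} (ha : 0 ≤ a) (hx : 0 < x) :
    |∑' k : ℕ, 2 * (a + k) * x * exp (-(a + k) ^ 2 * x) -
        (1 + (a - 1 / 6) * x + a ^ 2 * x ^ 2 / 3) * exp (-a ^ 2 * x)| ≤
      (∫ s, |(-16 * s ^ 4 + 48 * s ^ 2 - 12) * exp (-s ^ 2)|) / 12 * (x * √x) := by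
  have hG : ∀ t, HasDerivAt (fun t => -1 * exp (-t ^ 2 * x)) (2 * t * x * exp (-t ^ 2 * x)) t :=
    fun t => (hasDerivAt_mul_exp_neg_sq_mul x t (hasDerivAt_const t (-1))).congr_deriv (by ring)
  have hf : ∀ t, HasDerivAt (fun t => 2 * t * x * exp (-t ^ 2 * x))
      ((2 * x - 4 * t ^ 2 * x ^ 2) * exp (-t ^ 2 * x)) t := fun t =>
    (hasDerivAt_mul_exp_neg_sq_mul x t (((hasDerivAt_id' t).const_mul 2).mul_const x)).congr_deriv
      (by ring)
  have hf₁ : ∀ t, HasDerivAt (fun t => (2 * x - 4 * t ^ 2 * x ^ 2) * exp (-t ^ 2 * x))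
      ((8 * t ^ 3 * x ^ 3 - 12 * t * x ^ 2) * exp (-t ^ 2 * x)) t := fun t =>
    (hasDerivAt_mul_exp_neg_sq_mul x t ((hasDerivAt_const t (2 * x)).fun_sub
      (((hasDerivAt_pow 2 t).const_mul 4).mul_const (x ^ 2)))).congr_deriv (by push_cast; ring)
  have hf₂ : ∀ t, HasDerivAt (fun t => (8 * t ^ 3 * x ^ 3 - 12 * t * x ^ 2) * exp (-t ^ 2 * x))
      ((-16 * t ^ 4 * x ^ 4 + 48 * t ^ 2 * x ^ 3 - 12 * x ^ 2) * exp (-t ^ 2 * x)) t := fun t =>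
    (hasDerivAt_mul_exp_neg_sq_mul x t
      ((((hasDerivAt_pow 3 t).const_mul 8).mul_const (x ^ 3)).fun_sub
        (((hasDerivAt_id' t).const_mul 12).mul_const (x ^ 2)))).congr_deriv (by push_cast; ring)
  have hf₃ : Integrable fun t => (-16 * t ^ 4 * x ^ 4 + 48 * t ^ 2 * x ^ 3 - 12 * x ^ 2) *
      exp (-t ^ 2 * x) := by
    simp_rw [gaussian_third_deriv_eq_scaling hx]
    exact (integrable_quartic_mul_exp_neg_sq.comp_mul_left' (sqrt_pos.2 hx).ne').const_mul _
  have hsum := fun n => summable_pow_mul_exp_neg_sq_mul ha hx n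
  have hGt : Tendsto (fun n : ℕ => -1 * exp (-(a + n) ^ 2 * x)) atTop (𝓝 0) := by
    simpa using ((hsum 0).tendsto_atTop_zero.const_mul (-1))
  have hf₁t : Tendsto (fun n : ℕ => (2 * x - 4 * (a + n) ^ 2 * x ^ 2) * exp (-(a + n) ^ 2 * x))
      atTop (𝓝 0) := by
    have := ((hsum 0).tendsto_atTop_zero.const_mul (2 * x)).sub
      ((hsum 2).tendsto_atTop_zero.const_mul (4 * x ^ 2))
    rw [mul_zero, mul_zero, sub_zero] at this
    exact this.congr fun n => by ring
  have hEM := abs_tsum_sub_le_euler_maclaurin hG hf hf₁ hf₂ (by fun_prop) hf₃.integrableOn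
    (summable_mul_exp_neg_sq_mul ha hx) hGt hf₁t
  calc _ = |∑' k : ℕ, 2 * (a + k) * x * exp (-(a + k) ^ 2 * x) - (2 * a * x * exp (-a ^ 2 * x) / 2 -
        -1 * exp (-a ^ 2 * x) - (2 * x - 4 * a ^ 2 * x ^ 2) * exp (-a ^ 2 * x) / 12)| := by
        congr 2
        ring
    _ ≤ (∫ t in Ioi a, |(-16 * t ^ 4 * x ^ 4 + 48 * t ^ 2 * x ^ 3 - 12 * x ^ 2) *
        exp (-t ^ 2 * x)|) / 12 := hEM
    _ ≤ (∫ t, |(-16 * t ^ 4 * x ^ 4 + 48 * t ^ 2 * x ^ 3 - 12 * x ^ 2) *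
        exp (-t ^ 2 * x)|) / 12 :=
        div_le_div_of_nonneg_right (setIntegral_le_integral hf₃.abs
          (ae_of_all _ fun t => abs_nonneg _)) (by norm_num)
    _ = _ := by
        rw [integral_abs_gaussian_third_deriv hx]
        ring

/-- The paper's `φ_u(x)`, with the summation index shifted to start at `0`. -/
noncomputable def phi (u x : ℝ) : ℝ :=
  x * ∑' k : ℕ, 2 * ((k : ℝ) + 1 + u) * exp (-((k : ℝ) + 1 + u) ^ 2 * x)

lemma phi_eq_tsum (u x : ℝ) :
    phi u x = ∑' k : ℕ, 2 * (u + 1 + k) * x * exp (-(u + 1 + k) ^ 2 * x) := by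
  rw [phi, ← tsum_mul_left]
  refine tsum_congr fun k => ?_
  rw [show (k : ℝ) + 1 + u = u + 1 + k by ring]
  ring

theorem tendsto_phi_sub_one_div {u : ℝ} (hu : 0 ≤ u) :
    Tendsto (fun x => (phi u x - 1) / x) (𝓝[>] 0) (𝓝 (-(u ^ 2 + u + 1 / 6))) := by
  set m : ℝ → ℝ := fun x =>
    (1 + (u + 1 - 1 / 6) * x + (u + 1) ^ 2 * x ^ 2 / 3) * exp (-(u + 1) ^ 2 * x) with hm
  set C := (∫ s, |(-16 * s ^ 4 + 48 * s ^ 2 - 12) * exp (-s ^ 2)|) / 12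
  have hm' : HasDerivAt m (-(u ^ 2 + u + 1 / 6)) 0 :=
    (((((hasDerivAt_id' 0).const_mul (u + 1 - 1 / 6)).const_add 1).fun_add
      (((hasDerivAt_pow 2 0).const_mul ((u + 1) ^ 2)).div_const 3)).fun_mul
      ((hasDerivAt_id' 0).const_mul (-(u + 1) ^ 2)).exp).congr_deriv (by norm_num; ring)
  have hmain : Tendsto (fun x => (m x - 1) / x) (𝓝[>] 0) (𝓝 (-(u ^ 2 + u + 1 / 6))) := by
    refine hm'.tendsto_slope_zero_right.congr fun x => ?_
    simp [hm, div_eq_inv_mul]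
  have herr : Tendsto (fun x => (phi u x - m x) / x) (𝓝[>] 0) (𝓝 0) := by
    refine squeeze_zero_norm' (a := fun x => C * √x) ?_ ?_
    · filter_upwards [self_mem_nhdsWithin] with x (hx : 0 < x)
      rw [norm_div, Real.norm_eq_abs, Real.norm_of_nonneg hx.le, div_le_iff₀ hx, phi_eq_tsum]
      calc _ ≤ C * (x * √x) := abs_tsum_sub_le_gaussian (by positivity) hx
        _ = C * √x * x := by ring
    · simpa using ((continuous_sqrt.tendsto 0).const_mul C).mono_left nhdsWithin_le_nhds
  rw [← add_zero (-(u ^ 2 + u + 1 / 6))]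
  exact (hmain.add herr).congr fun x => by ring

lemma mul_exp_le_phi {u x : ℝ} (hu : 0 ≤ u) (hx : 0 < x) :
    2 * (u + 1) * (x * exp (-(u + 1) ^ 2 * x)) ≤ phi u x := by
  rw [phi_eq_tsum]
  calc _ = 2 * (u + 1 + (0 : ℕ)) * x * exp (-(u + 1 + (0 : ℕ)) ^ 2 * x) := by
        rw [Nat.cast_zero, add_zero]; ring
    _ ≤ _ := (summable_mul_exp_neg_sq_mul (by positivity) hx).le_tsum 0 fun k _ =>
        mul_nonneg (mul_nonneg (by positivity) hx.le) (exp_pos _).le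

lemma phi_le_mul_exp {u x : ℝ} (hu : 0 ≤ u) (hx : 1 ≤ x) :
    phi u x ≤ 2 * (u + 1) * (∑' k : ℕ, exp (-(k : ℝ))) * (x * exp (-(u + 1) ^ 2 * x)) := by
  rw [phi_eq_tsum]
  set a := u + 1
  have ha : 1 ≤ a := by linarith
  have hterm : ∀ k : ℕ, 2 * (a + k) * x * exp (-(a + k) ^ 2 * x) ≤
      2 * a * x * exp (-a ^ 2 * x) * exp (-k) := fun k => by
    have hk : (0 : ℝ) ≤ k := k.cast_nonneg
    have h₁ : a + k ≤ a * exp k := by nlinarith [add_one_le_exp (k : ℝ)]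
    have h₂ : -(a + k) ^ 2 * x ≤ -a ^ 2 * x + -2 * k := by
      nlinarith [mul_nonneg hk (by nlinarith : 0 ≤ a * x - 1),
        mul_nonneg (mul_nonneg hk hk) (by linarith : 0 ≤ x)]
    calc _ ≤ 2 * (a * exp k) * x * exp (-a ^ 2 * x + -2 * k) := by gcongr
      _ = 2 * a * x * exp (-a ^ 2 * x) * exp (k + -2 * k) := by rw [exp_add, exp_add]; ring
      _ = _ := by ring_nf
  calc _ ≤ ∑' k : ℕ, 2 * a * x * exp (-a ^ 2 * x) * exp (-k) :=
        (summable_mul_exp_neg_sq_mul (by positivity) (by positivity)).tsum_le_tsum hterm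
          (summable_exp_neg_nat.mul_left _)
    _ = _ := by rw [tsum_mul_left]; ring

theorem log_phi_limits (u : ℝ) (hu : 0 ≤ u) :
    Filter.Tendsto
      (fun x : ℝ => -(Real.log (x * ∑' k : ℕ,
          2 * ((k : ℝ) + 1 + u) * Real.exp (-((k : ℝ) + 1 + u) ^ 2 * x))) / x)
      (nhdsWithin 0 (Set.Ioi 0)) (nhds (u ^ 2 + u + 1 / 6)) ∧
    Filter.Tendsto
      (fun x : ℝ => -(Real.log (x * ∑' k : ℕ,
          2 * ((k : ℝ) + 1 + u) * Real.exp (-((k : ℝ) + 1 + u) ^ 2 * x))) / x)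
      Filter.atTop (nhds ((u + 1) ^ 2)) := by
  refine ⟨?_, ?_⟩
  · have h := (tendsto_log_div_of_tendsto_sub_one_div (nhdsGT_le_nhdsNE 0)
      (tendsto_phi_sub_one_div hu)).neg
    rw [neg_neg] at h
    exact h.congr fun x => (neg_div x _).symm
  · exact tendsto_neg_log_div_atTop_of_le_of_le (by linarith : (0 : ℝ) < 2 * (u + 1))
      ((eventually_gt_atTop 0).mono fun x hx => mul_exp_le_phi hu hx)
      ((eventually_ge_atTop 1).mono fun x hx => phi_le_mul_exp hu hx)
end

section
/- For every μ > 0, p > 0, u > −1, and t > 0: if p − u ≤ 1/2 then |1/(μ(p²+t²)^μ) − S_μ(t,u)| < 1/(μ p^{2μ}) − S_μ(0,u), and if p − u ≥ 1 then |1/(μ(p²+t²)^μ) − S_μ(t,u)| < S_μ(0,u) − 1/(μ p^{2μ}). -/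
open Real Set Filter MeasureTheory Topology intervalIntegral

/-!
Let `g_s x = 2x / (x² + s²)^(μ+1)`, whose integral over `[p, ∞)` is `1 / (μ (p² + s²)^μ)`. Both
claims say that `(1/(μ p^(2μ)) - S_μ(0,u)) ± (1/(μ (p²+t²)^μ) - S_μ(t,u))` has a fixed sign, that
is, that `∑ₖ (∫_{p+k}^{p+k+1} F - F (k+1+u))` has a fixed sign for `F = g_0 ± g_t`. Bernoulli's
inequality gives `|g_t'| < -g_0'` and `|g_t''| < g_0''` on `(0, ∞)`, so `F` is strictly
decreasing and strictly convex there. If `p - u ≤ 1/2` the node `k+1+u` lies right of the midpoint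
of `[p+k, p+k+1]`, so `F (k+1+u)` is below the mean of `F` on that interval by Hermite–Hadamard;
if `p - u ≥ 1` it lies left of the interval, so `F (k+1+u)` is above that mean.
-/

lemma hasDerivAt_div_sq_add_sq_rpow {N : ℝ → ℝ} {N' e s x : ℝ} (hN : HasDerivAt N N' x)
    (hx : x ≠ 0) :
    HasDerivAt (fun y => N y / (y ^ 2 + s ^ 2) ^ e)
      ((N' * (x ^ 2 + s ^ 2) - 2 * e * x * N x) / (x ^ 2 + s ^ 2) ^ (e + 1)) x := by
  have hB : 0 < x ^ 2 + s ^ 2 := by positivity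
  have hpow : HasDerivAt (fun y => (y ^ 2 + s ^ 2) ^ e)
      (2 * x * e * (x ^ 2 + s ^ 2) ^ (e - 1)) x := by
    simpa using ((hasDerivAt_pow 2 x).add_const (s ^ 2)).rpow_const (p := e) (Or.inl hB.ne')
  refine (hN.div hpow (rpow_pos_of_pos hB e).ne').congr_deriv ?_
  have h₁ : (x ^ 2 + s ^ 2) ^ e = (x ^ 2 + s ^ 2) ^ (e - 1) * (x ^ 2 + s ^ 2) := by
    rw [← rpow_add_one hB.ne']; ring_nf
  have h₂ : (x ^ 2 + s ^ 2) ^ (e + 1) = (x ^ 2 + s ^ 2) ^ (e - 1) * (x ^ 2 + s ^ 2) ^ 2 := by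
    rw [← rpow_two (x ^ 2 + s ^ 2), ← rpow_add hB]; ring_nf
  rw [h₁, h₂]
  field_simp

lemma abs_div_add_rpow_lt {N P X T e : ℝ} (hX : 0 < X) (hT : 0 ≤ T) (he : 1 ≤ e)
    (hN : |N| < P * (1 + e * (T / X))) : |N / (X + T) ^ e| < P / X ^ e := by
  have hXe := rpow_pos_of_pos hX e
  have hbern : X ^ e * (1 + e * (T / X)) ≤ (X + T) ^ e := by
    calc X ^ e * (1 + e * (T / X)) ≤ X ^ e * (1 + T / X) ^ e := by
          gcongr; exact one_add_mul_self_le_rpow_one_add (by linarith [div_nonneg hT hX.le]) he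
      _ = (X + T) ^ e := by
          rw [← mul_rpow hX.le (by positivity)]; congr 1; field_simp
  rw [abs_div, abs_of_pos (by positivity : 0 < (X + T) ^ e), div_lt_div_iff₀ (by positivity) hXe]
  calc |N| * X ^ e < P * (1 + e * (T / X)) * X ^ e := by gcongr
    _ = P * (X ^ e * (1 + e * (T / X))) := by ring
    _ ≤ P * (X + T) ^ e := by
        have h1 : 0 < 1 + e * (T / X) := by positivity
        have hP : 0 < P := by nlinarith [abs_nonneg N]
        gcongr

lemma pos_add_mul_of_abs_lt {x y c : ℝ} (h : |y| < x) (hc : |c| ≤ 1) : 0 < x + c * y := by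
  have : |c * y| ≤ |y| := by rw [abs_mul]; exact mul_le_of_le_one_left (abs_nonneg y) hc
  linarith [neg_abs_le (c * y)]

lemma strictConvexOn_of_hasDerivAt2_pos {D : Set ℝ} (hD : Convex ℝ D) (hD' : IsOpen D)
    {f f' f'' : ℝ → ℝ} (hf : ∀ x ∈ D, HasDerivAt f (f' x) x)
    (hf' : ∀ x ∈ D, HasDerivAt f' (f'' x) x) (hf'' : ∀ x ∈ D, 0 < f'' x) :
    StrictConvexOn ℝ D f := by
  have hmono : StrictMonoOn f' D :=
    strictMonoOn_of_hasDerivWithinAt_pos hD (fun x hx => (hf' x hx).continuousAt.continuousWithinAt)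
      (by rw [hD'.interior_eq]; exact fun x hx => (hf' x hx).hasDerivWithinAt)
      (by rwa [hD'.interior_eq])
  refine StrictMonoOn.strictConvexOn_of_deriv hD
    (fun x hx => (hf x hx).continuousAt.continuousWithinAt) ?_
  rw [hD'.interior_eq]
  exact hmono.congr fun x hx => ((hf x hx).deriv).symm

lemma strictAntiOn_of_hasDerivAt_neg {D : Set ℝ} (hD : Convex ℝ D) (hD' : IsOpen D)
    {f f' : ℝ → ℝ} (hf : ∀ x ∈ D, HasDerivAt f (f' x) x) (hf' : ∀ x ∈ D, f' x < 0) :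
    StrictAntiOn f D :=
  strictAntiOn_of_hasDerivWithinAt_neg hD (fun x hx => (hf x hx).continuousAt.continuousWithinAt)
    (by rw [hD'.interior_eq]; exact fun x hx => (hf x hx).hasDerivWithinAt)
    (by rwa [hD'.interior_eq])

lemma StrictConvexOn.mul_apply_midpoint_lt_integral {f : ℝ → ℝ} {a b : ℝ} (hab : a < b)
    (hf : StrictConvexOn ℝ (Icc a b) f) (hc : ContinuousOn f (Icc a b)) :
    (b - a) * f ((a + b) / 2) < ∫ x in a..b, f x := by
  have hrefl : MapsTo (fun x => a + b - x) (Icc a b) (Icc a b) := fun x hx =>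
    ⟨by linarith [hx.2], by linarith [hx.1]⟩
  have hc' : ContinuousOn (fun x => f (a + b - x)) (Icc a b) :=
    hc.comp (continuousOn_const.sub continuousOn_id) hrefl
  -- pair each point with its mirror image about the midpoint
  have hsymm : ∫ x in a..b, f (a + b - x) = ∫ x in a..b, f x := by
    rw [integral_comp_sub_left]; congr 1 <;> ring
  have hhalf : (0 : ℝ) < 1 / 2 := by norm_num
  have hmid : ∀ x ∈ Icc a b, 2 * f ((a + b) / 2) ≤ f x + f (a + b - x) := by
    intro x hx
    have := hf.convexOn.2 hx (hrefl hx) hhalf.le hhalf.le (by norm_num)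
    simp only [smul_eq_mul] at this
    rw [show 1 / 2 * x + 1 / 2 * (a + b - x) = (a + b) / 2 by ring] at this
    linarith
  have hlt : 2 * f ((a + b) / 2) < f a + f (a + b - a) := by
    have := hf.2 (left_mem_Icc.2 hab.le) (right_mem_Icc.2 hab.le) hab.ne hhalf hhalf (by norm_num)
    simp only [smul_eq_mul] at this
    rw [show 1 / 2 * a + 1 / 2 * b = (a + b) / 2 by ring] at this
    rw [show a + b - a = b by ring]
    linarith
  have key := integral_lt_integral_of_continuousOn_of_le_of_exists_lt hab continuousOn_const
    (hc.add hc') (fun x hx => hmid x (Ioc_subset_Icc_self hx)) ⟨a, left_mem_Icc.2 hab.le, hlt⟩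
  simp only [Pi.add_apply] at key
  rw [intervalIntegral.integral_const, integral_add (hc.intervalIntegrable_of_Icc hab.le)
    (hc'.intervalIntegrable_of_Icc hab.le), hsymm, smul_eq_mul] at key
  linarith

lemma StrictAntiOn.integral_lt_mul_apply_left {f : ℝ → ℝ} {a b : ℝ} (hab : a < b)
    (hf : StrictAntiOn f (Icc a b)) (hc : ContinuousOn f (Icc a b)) :
    ∫ x in a..b, f x < (b - a) * f a := by
  have ha := left_mem_Icc.2 hab.le
  have key := integral_lt_integral_of_continuousOn_of_le_of_exists_lt hab hc continuousOn_const
    (fun x hx => (hf ha (Ioc_subset_Icc_self hx) hx.1).le)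
    ⟨b, right_mem_Icc.2 hab.le, hf ha (right_mem_Icc.2 hab.le) hab⟩
  rwa [intervalIntegral.integral_const, smul_eq_mul] at key

lemma hasSum_integral_of_hasDerivAt_of_tendsto {F f : ℝ → ℝ} {a L : ℝ}
    (hF : ∀ x ∈ Ici a, HasDerivAt F (f x) x) (hf : ContinuousOn f (Ici a))
    (hf₀ : ∀ x ∈ Ici a, 0 ≤ f x) (hL : Tendsto F atTop (𝓝 L)) :
    HasSum (fun k : ℕ => ∫ x in (a + k)..(a + k + 1), f x) (L - F a) := by
  have hsub : ∀ k : ℕ, Icc (a + k) (a + k + 1) ⊆ Ici a := fun k x hx =>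
    le_trans (by simp) hx.1
  have hstep : ∀ k : ℕ,
      ∫ x in (a + k)..(a + k + 1), f x = F (a + ↑(k + 1)) - F (a + k) := by
    intro k
    rw [integral_eq_sub_of_hasDerivAt
      (fun x hx => hF x (hsub k (by rwa [uIcc_of_le (by linarith)] at hx)))
      ((hf.mono (hsub k)).intervalIntegrable_of_Icc (by linarith))]
    push_cast; ring_nf
  rw [hasSum_iff_tendsto_nat_of_nonneg fun k =>
    integral_nonneg (by linarith) fun x hx => hf₀ x (hsub k hx)]
  simp_rw [hstep, Finset.sum_range_sub (fun k : ℕ => F (a + k))]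
  simpa using (hL.comp (tendsto_atTop_add_const_left _ a tendsto_natCast_atTop_atTop)).sub_const
    (F a)

namespace SMu

noncomputable def term (μ s x : ℝ) : ℝ := 2 * x / (x ^ 2 + s ^ 2) ^ (μ + 1)

noncomputable def termDeriv (μ s x : ℝ) : ℝ :=
  2 * (s ^ 2 - (2 * μ + 1) * x ^ 2) / (x ^ 2 + s ^ 2) ^ (μ + 2)

noncomputable def termDeriv2 (μ s x : ℝ) : ℝ :=
  4 * (μ + 1) * x * ((2 * μ + 1) * x ^ 2 - 3 * s ^ 2) / (x ^ 2 + s ^ 2) ^ (μ + 3)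

variable {μ s x : ℝ}

lemma hasDerivAt_primitive (hμ : μ ≠ 0) (hx : x ≠ 0) :
    HasDerivAt (fun y => -(1 / (μ * (y ^ 2 + s ^ 2) ^ μ))) (term μ s x) x := by
  have h := hasDerivAt_div_sq_add_sq_rpow (e := μ) (s := s) (hasDerivAt_const x (-μ⁻¹)) hx
  convert h using 1
  · ext y; field_simp
  · simp only [term]; field_simp; ring

lemma hasDerivAt_term (hx : x ≠ 0) : HasDerivAt (term μ s) (termDeriv μ s x) x := by
  have h := hasDerivAt_div_sq_add_sq_rpow (e := μ + 1) (s := s) ((hasDerivAt_id' x).const_mul 2) hx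
  rw [show μ + 1 + 1 = μ + 2 by ring] at h
  refine h.congr_deriv ?_
  simp only [termDeriv]; ring_nf

lemma hasDerivAt_termDeriv (hx : x ≠ 0) : HasDerivAt (termDeriv μ s) (termDeriv2 μ s x) x := by
  have hN : HasDerivAt (fun y => 2 * (s ^ 2 - (2 * μ + 1) * y ^ 2))
      (-(4 * (2 * μ + 1) * x)) x := by
    refine ((((hasDerivAt_pow 2 x).const_mul (2 * μ + 1)).const_sub (s ^ 2)).const_mul
      2).congr_deriv ?_
    norm_num; ring
  have h := hasDerivAt_div_sq_add_sq_rpow (e := μ + 2) (s := s) hN hx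
  rw [show μ + 2 + 1 = μ + 3 by ring] at h
  refine h.congr_deriv ?_
  simp only [termDeriv2]; ring_nf

lemma continuousOn_term : ContinuousOn (term μ s) (Ioi 0) := fun _ hx =>
  (hasDerivAt_term hx.ne').continuousAt.continuousWithinAt

lemma abs_termDeriv_lt (hμ : 0 < μ) (hs : s ≠ 0) (hx : x ≠ 0) :
    |termDeriv μ s x| < -termDeriv μ 0 x := by
  have hX : 0 < x ^ 2 := by positivity
  have hS : 0 < s ^ 2 := by positivity
  have h0 : -termDeriv μ 0 x = 2 * (2 * μ + 1) * x ^ 2 / (x ^ 2) ^ (μ + 2) := by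
    simp only [termDeriv]; ring_nf
  rw [h0]
  refine abs_div_add_rpow_lt hX hS.le (by linarith) ?_
  have hP : 2 * (2 * μ + 1) * x ^ 2 * (1 + (μ + 2) * (s ^ 2 / x ^ 2))
      = 2 * (2 * μ + 1) * x ^ 2 + 2 * (2 * μ + 1) * (μ + 2) * s ^ 2 := by
    field_simp
  rw [hP, abs_lt]
  constructor <;> nlinarith [mul_pos hμ hS, mul_pos (mul_pos hμ hμ) hS]

lemma abs_termDeriv2_lt (hμ : 0 < μ) (hs : s ≠ 0) (hx : 0 < x) :
    |termDeriv2 μ s x| < termDeriv2 μ 0 x := by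
  have hX : 0 < x ^ 2 := by positivity
  have hS : 0 < s ^ 2 := by positivity
  have hK : 0 < 4 * (μ + 1) * x := by positivity
  have h0 : termDeriv2 μ 0 x = 4 * (μ + 1) * x * ((2 * μ + 1) * x ^ 2) / (x ^ 2) ^ (μ + 3) := by
    simp only [termDeriv2]; ring_nf
  rw [h0]
  refine abs_div_add_rpow_lt hX hS.le (by linarith) ?_
  have hP : 4 * (μ + 1) * x * ((2 * μ + 1) * x ^ 2) * (1 + (μ + 3) * (s ^ 2 / x ^ 2))
      = 4 * (μ + 1) * x * ((2 * μ + 1) * x ^ 2 + (2 * μ + 1) * (μ + 3) * s ^ 2) := by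
    field_simp
  rw [hP, abs_mul, abs_of_pos hK]
  refine mul_lt_mul_of_pos_left ?_ hK
  rw [abs_lt]
  constructor <;> nlinarith [mul_pos hμ hS, mul_pos (mul_pos hμ hμ) hS]

lemma term_nonneg (hx : 0 ≤ x) : 0 ≤ term μ s x := by
  unfold term; positivity

lemma hasSum_integral_term (hμ : 0 < μ) {p : ℝ} (hp : 0 < p) (s : ℝ) :
    HasSum (fun k : ℕ => ∫ x in (p + k)..(p + k + 1), term μ s x)
      (1 / (μ * (p ^ 2 + s ^ 2) ^ μ)) := by
  have hpos : ∀ x ∈ Ici p, 0 < x := fun x hx => hp.trans_le hx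
  have hlim : Tendsto (fun y : ℝ => -(1 / (μ * (y ^ 2 + s ^ 2) ^ μ))) atTop (𝓝 0) := by
    have h : Tendsto (fun y : ℝ => μ * (y ^ 2 + s ^ 2) ^ μ) atTop atTop :=
      ((tendsto_rpow_atTop hμ).comp (tendsto_atTop_add_const_right _ _
        (tendsto_pow_atTop two_ne_zero))).const_mul_atTop hμ
    simpa using h.inv_tendsto_atTop.neg
  simpa using hasSum_integral_of_hasDerivAt_of_tendsto
    (fun x hx => hasDerivAt_primitive hμ.ne' (hpos x hx).ne')
    (continuousOn_term.mono fun x hx => hpos x hx) (fun x hx => term_nonneg (hpos x hx).le) hlim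

lemma term_le_two_div_rpow (hμ : 0 < μ) (hx : 0 < x) : term μ s x ≤ 2 / x ^ (2 * μ + 1) := by
  have hx2 : (x ^ 2) ^ (μ + 1) = x * x ^ (2 * μ + 1) := by
    rw [← rpow_natCast, ← rpow_mul hx.le, ← rpow_one_add' hx.le (by positivity)]
    norm_num; ring_nf
  calc term μ s x ≤ 2 * x / (x ^ 2) ^ (μ + 1) := by
        unfold term
        gcongr
        linarith [sq_nonneg s]
    _ = 2 / x ^ (2 * μ + 1) := by
        rw [hx2]; field_simp

lemma summable_term (hμ : 0 < μ) {u : ℝ} (hu : -1 < u) (s : ℝ) :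
    Summable (fun k : ℕ => term μ s (k + 1 + u)) := by
  have hpos : ∀ k : ℕ, (0 : ℝ) < k + 1 + u := fun k => by
    linarith [(k.cast_nonneg : (0 : ℝ) ≤ k)]
  refine Summable.of_nonneg_of_le (fun k => term_nonneg (hpos k).le)
    (fun k => term_le_two_div_rpow hμ (hpos k))
    (((Real.summable_one_div_nat_add_rpow (1 + u) (2 * μ + 1)).2 (by linarith)).mul_left 2 |>.congr
      fun k => ?_)
  rw [abs_of_pos (by linarith [hpos k]), ← add_assoc]
  ring

noncomputable def series (μ t u : ℝ) : ℝ := ∑' k : ℕ, term μ t (k + 1 + u)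

variable {p u t c : ℝ}

lemma strictAntiOn_term_add_mul (hμ : 0 < μ) (ht : t ≠ 0) (hc : |c| ≤ 1) :
    StrictAntiOn (fun x => term μ 0 x + c * term μ t x) (Ioi 0) :=
  strictAntiOn_of_hasDerivAt_neg (convex_Ioi 0) isOpen_Ioi
    (fun _ hx => (hasDerivAt_term hx.ne').add ((hasDerivAt_term hx.ne').const_mul c))
    fun _ hx => by
      have := pos_add_mul_of_abs_lt (abs_termDeriv_lt hμ ht hx.ne') (c := -c)
        (by rwa [abs_neg])
      linarith

lemma strictConvexOn_term_add_mul (hμ : 0 < μ) (ht : t ≠ 0) (hc : |c| ≤ 1) :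
    StrictConvexOn ℝ (Ioi 0) (fun x => term μ 0 x + c * term μ t x) :=
  strictConvexOn_of_hasDerivAt2_pos (convex_Ioi 0) isOpen_Ioi
    (fun _ hx => (hasDerivAt_term hx.ne').add ((hasDerivAt_term hx.ne').const_mul c))
    (fun _ hx => (hasDerivAt_termDeriv hx.ne').add ((hasDerivAt_termDeriv hx.ne').const_mul c))
    fun _ hx => pos_add_mul_of_abs_lt (abs_termDeriv2_lt hμ ht hx) hc

lemma continuousOn_term_add_mul : ContinuousOn (fun x => term μ 0 x + c * term μ t x) (Ioi 0) :=
  continuousOn_term.add (continuousOn_const.mul continuousOn_term)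

lemma hasSum_term_add_mul (hμ : 0 < μ) (hu : -1 < u) :
    HasSum (fun k : ℕ => term μ 0 (k + 1 + u) + c * term μ t (k + 1 + u))
      (series μ 0 u + c * series μ t u) :=
  (summable_term hμ hu 0).hasSum.add ((summable_term hμ hu t).hasSum.mul_left c)

lemma hasSum_integral_term_add_mul (hμ : 0 < μ) (hp : 0 < p) :
    HasSum (fun k : ℕ => ∫ x in (p + k)..(p + k + 1), (term μ 0 x + c * term μ t x))
      (1 / (μ * (p ^ 2 + 0 ^ 2) ^ μ) + c * (1 / (μ * (p ^ 2 + t ^ 2) ^ μ))) := by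
  have hint : ∀ (s : ℝ) (k : ℕ), IntervalIntegrable (term μ s) volume (p + k) (p + k + 1) :=
    fun s k => (continuousOn_term.mono fun x hx => (by positivity : (0 : ℝ) < p + k).trans_le
      hx.1).intervalIntegrable_of_Icc (by linarith)
  convert (hasSum_integral_term hμ hp 0).add ((hasSum_integral_term hμ hp t).mul_left c) using 2
    with k
  rw [integral_add (hint 0 k) ((hint t k).const_mul c), intervalIntegral.integral_const_mul]

lemma add_mul_lt_of_sub_le_half (hμ : 0 < μ) (hp : 0 < p) (hu : -1 < u) (ht : t ≠ 0)
    (hc : |c| ≤ 1) (hpu : p - u ≤ 1 / 2) :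
    series μ 0 u + c * series μ t u <
      1 / (μ * (p ^ 2 + 0 ^ 2) ^ μ) + c * (1 / (μ * (p ^ 2 + t ^ 2) ^ μ)) := by
  set F := fun x => term μ 0 x + c * term μ t x
  have key : ∀ k : ℕ, F (k + 1 + u) < ∫ x in (p + k)..(p + k + 1), F x := by
    intro k
    have hl : 0 < p + k := by positivity
    have hI : Icc (p + k) (p + k + 1) ⊆ Ioi 0 := fun x hx => hl.trans_le hx.1
    have hm : (0 : ℝ) < (p + k + (p + k + 1)) / 2 := by linarith
    calc F (k + 1 + u) ≤ F ((p + k + (p + k + 1)) / 2) :=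
          (strictAntiOn_term_add_mul hμ ht hc).antitoneOn hm (by simp only [mem_Ioi]; linarith)
            (by linarith)
      _ = (p + k + 1 - (p + k)) * F ((p + k + (p + k + 1)) / 2) := by ring
      _ < ∫ x in (p + k)..(p + k + 1), F x :=
          ((strictConvexOn_term_add_mul hμ ht hc).subset hI
            (convex_Icc _ _)).mul_apply_midpoint_lt_integral (by linarith)
            (continuousOn_term_add_mul.mono hI)
  exact hasSum_lt (fun k => (key k).le) (key 0) (hasSum_term_add_mul hμ hu)
    (hasSum_integral_term_add_mul hμ hp)

lemma lt_add_mul_of_one_le_sub (hμ : 0 < μ) (hp : 0 < p) (hu : -1 < u) (ht : t ≠ 0)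
    (hc : |c| ≤ 1) (hpu : 1 ≤ p - u) :
    1 / (μ * (p ^ 2 + 0 ^ 2) ^ μ) + c * (1 / (μ * (p ^ 2 + t ^ 2) ^ μ)) <
      series μ 0 u + c * series μ t u := by
  set F := fun x => term μ 0 x + c * term μ t x
  have hanti := strictAntiOn_term_add_mul hμ ht hc
  have key : ∀ k : ℕ, ∫ x in (p + k)..(p + k + 1), F x < F (k + 1 + u) := by
    intro k
    have ha : (0 : ℝ) < k + 1 + u := by linarith [(k.cast_nonneg : (0 : ℝ) ≤ k)]
    have hI : Icc (p + k) (p + k + 1) ⊆ Ioi 0 := fun x hx =>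
      (by linarith : 0 < p + k).trans_le hx.1
    calc ∫ x in (p + k)..(p + k + 1), F x < (p + k + 1 - (p + k)) * F (p + k) :=
          (hanti.mono hI).integral_lt_mul_apply_left (by linarith)
            (continuousOn_term_add_mul.mono hI)
      _ = F (p + k) := by ring
      _ ≤ F (k + 1 + u) := hanti.antitoneOn ha (by simp only [mem_Ioi]; linarith) (by linarith)
  exact hasSum_lt (fun k => (key k).le) (key 0) (hasSum_integral_term_add_mul hμ hp)
    (hasSum_term_add_mul hμ hu)

end SMu

theorem S_mu_abs_bounds (μ p u t : ℝ) (hμ : 0 < μ) (hp : 0 < p) (hu : -1 < u) (ht : 0 < t) :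
    (p - u ≤ 1 / 2 →
      |1 / (μ * (p ^ 2 + t ^ 2) ^ μ)
          - ∑' k : ℕ, 2 * ((k : ℝ) + 1 + u) / ((((k : ℝ) + 1 + u) ^ 2 + t ^ 2) ^ (μ + 1))|
        < 1 / (μ * p ^ (2 * μ))
          - ∑' k : ℕ, 2 * ((k : ℝ) + 1 + u) / ((((k : ℝ) + 1 + u) ^ 2 + (0:ℝ) ^ 2) ^ (μ + 1))) ∧
    (1 ≤ p - u →
      |1 / (μ * (p ^ 2 + t ^ 2) ^ μ)
          - ∑' k : ℕ, 2 * ((k : ℝ) + 1 + u) / ((((k : ℝ) + 1 + u) ^ 2 + t ^ 2) ^ (μ + 1))|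
        < (∑' k : ℕ, 2 * ((k : ℝ) + 1 + u) / ((((k : ℝ) + 1 + u) ^ 2 + (0:ℝ) ^ 2) ^ (μ + 1)))
          - 1 / (μ * p ^ (2 * μ))) := by
  have hp0 : p ^ (2 * μ) = (p ^ 2 + (0 : ℝ) ^ 2) ^ μ := by
    rw [zero_pow two_ne_zero, add_zero, ← rpow_natCast, ← rpow_mul hp.le]; norm_num
  change (_ → |_ - SMu.series μ t u| < _ - SMu.series μ 0 u) ∧
    (_ → |_ - SMu.series μ t u| < SMu.series μ 0 u - _)
  rw [hp0, abs_lt, abs_lt]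
  refine ⟨fun hpu => ?_, fun hpu => ?_⟩
  · have h₁ := SMu.add_mul_lt_of_sub_le_half hμ hp hu ht.ne' (c := 1) (by norm_num) hpu
    have h₂ := SMu.add_mul_lt_of_sub_le_half hμ hp hu ht.ne' (c := -1) (by norm_num) hpu
    constructor <;> linarith
  · have h₁ := SMu.lt_add_mul_of_one_le_sub hμ hp hu ht.ne' (c := 1) (by norm_num) hpu
    have h₂ := SMu.lt_add_mul_of_one_le_sub hμ hp hu ht.ne' (c := -1) (by norm_num) hpu
    constructor <;> linarith
end
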